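/- arXiv:1710.03871 — 7 statements merged into one kernel-verified Lean document; each statement's English description precedes it below -/
import Mathlib

section
/- For all n ≥ 3 (with initial values D(P1,x)=x, D(P2,x)=x^2+2x, D(P3,x)=x^3+3x^2+x), the domination polynomial of the path satisfies the recurrence D(P_n,x) = x( D(P_{n-1},x) + D(P_{n-2},x) + D(P_{n-3},x) ). -/
open SimpleGraph Polynomial Finset

open Classical in
/-- The number of dominating sets of `G` of cardinality `i`. -/
noncomputable def domCount {V : Type*} [Fintype V] [DecidableEq V]
    (G : SimpleGraph V) (i : ℕ) : ℕ :=
  (Finset.univ.filter fun S : Finset V =>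
    S.card = i ∧ ∀ v : V, v ∈ S ∨ ∃ u ∈ S, G.Adj u v).card

/-- The domination polynomial of `G`. -/
noncomputable def domPoly {V : Type*} [Fintype V] [DecidableEq V]
    (G : SimpleGraph V) : Polynomial ℤ :=
  ∑ i ∈ Finset.range (Fintype.card V + 1), Polynomial.C (domCount G i : ℤ) * Polynomial.X ^ i

/-- The domination number of `G`. -/
noncomputable def domNum {V : Type*} [Fintype V] [DecidableEq V] (G : SimpleGraph V) : ℕ :=
  sInf {i | ∃ S : Finset V, S.card = i ∧ ∀ v : V, v ∈ S ∨ ∃ u ∈ S, G.Adj u v}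

/-! In a dominating set `S` of the path `0 - 1 - ⋯ - (n-1)` with `n ≥ 4`, the largest element is
`≥ n - 2` and the gap `g` between the two largest elements is `1`, `2` or `3` (otherwise a vertex
between them is undominated). Deleting the largest element gives a dominating set of `P_{n-g}`,
and conversely adding `max T + g` to a dominating set `T` of `P_{n-g}` gives one of `P_n`. This
bijection lowers the size by one, whence `D(P_n) = x (D(P_{n-1}) + D(P_{n-2}) + D(P_{n-3}))`.
For `n = 3` it breaks down (`{1}` has no second element), and the identity is checked directly
using `D(P_0) = 1`. -/

theorem domPoly_eq_sum_dominating {V : Type*} [Fintype V] [DecidableEq V] (G : SimpleGraph V)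
    [DecidablePred fun S : Finset V => ∀ v, v ∈ S ∨ ∃ u ∈ S, G.Adj u v] :
    domPoly G =
      ∑ S ∈ univ.filter (fun S : Finset V => ∀ v, v ∈ S ∨ ∃ u ∈ S, G.Adj u v), X ^ #S := by
  rw [← sum_fiberwise_of_maps_to (g := card) (t := range (Fintype.card V + 1))
    fun S _ => mem_range_succ_iff.mpr (card_le_univ S)]
  refine sum_congr rfl fun i _ => ?_
  rw [sum_congr rfl fun S hS => by rw [(mem_filter.mp hS).2], sum_const, filter_filter, domCount]
  simp only [and_comm, nsmul_eq_mul, map_natCast]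
  congr

/-- The dominating sets of `pathGraph n`, with the vertex `i : Fin n` read as `(i : ℕ)`. -/
def pathDomSets (n : ℕ) : Finset (Finset ℕ) :=
  (range n).powerset.filter fun T => ∀ k < n, ∃ t ∈ T, k ≤ t + 1 ∧ t ≤ k + 1

theorem mem_pathDomSets {n : ℕ} {T : Finset ℕ} :
    T ∈ pathDomSets n ↔
      T ⊆ range n ∧ ∀ k < n, ∃ t ∈ T, k ≤ t + 1 ∧ t ≤ k + 1 := by
  rw [pathDomSets, mem_filter, mem_powerset]

theorem map_valEmbedding_mem_pathDomSets_iff {n : ℕ} {S : Finset (Fin n)} :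
    S.map Fin.valEmbedding ∈ pathDomSets n ↔
      ∀ v, v ∈ S ∨ ∃ u ∈ S, (pathGraph n).Adj u v := by
  have hsub : S.map Fin.valEmbedding ⊆ range n := by
    simp only [subset_iff, mem_map, Fin.valEmbedding_apply, mem_range]
    rintro _ ⟨u, -, rfl⟩
    exact u.isLt
  simp only [mem_pathDomSets, hsub, true_and, mem_map, Fin.valEmbedding_apply,
    exists_exists_and_eq_and, pathGraph_adj]
  refine (Fin.forall_iff
      (p := fun v : Fin n => ∃ u ∈ S, (v : ℕ) ≤ u + 1 ∧ (u : ℕ) ≤ v + 1)).symm.trans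
    (forall_congr' fun v => ⟨fun ⟨u, hu, h⟩ => ?_, ?_⟩)
  · rcases eq_or_ne u v with rfl | huv
    · exact .inl hu
    · exact .inr ⟨u, hu, by omega⟩
  · rintro (hv | ⟨u, hu, h⟩)
    · exact ⟨v, hv, by omega, by omega⟩
    · exact ⟨u, hu, by omega, by omega⟩

theorem domPoly_pathGraph (n : ℕ) : domPoly (pathGraph n) = ∑ T ∈ pathDomSets n, X ^ #T := by
  classical
  rw [domPoly_eq_sum_dominating]
  refine sum_bij (fun S _ => S.map Fin.valEmbedding) (fun S hS => ?_)
    (fun _ _ _ _ => map_inj.mp) (fun T hT => ?_) (fun S _ => by rw [card_map])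
  · exact map_valEmbedding_mem_pathDomSets_iff.mpr (mem_filter.mp hS).2
  · have hlt : ∀ t ∈ T, t < n := fun t ht => mem_range.mp ((mem_pathDomSets.mp hT).1 ht)
    rw [← map_valEmbedding_attachFin hlt, map_valEmbedding_mem_pathDomSets_iff] at hT
    exact ⟨T.attachFin hlt, mem_filter.mpr ⟨mem_univ _, hT⟩, map_valEmbedding_attachFin hlt⟩

theorem sup_id_mem_of_nonempty {α : Type*} [LinearOrder α] [OrderBot α] {s : Finset α}
    (h : s.Nonempty) : s.sup id ∈ s := by
  obtain ⟨a, ha, he⟩ := exists_mem_eq_sup s h id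
  exact he ▸ ha

section MaxGap

variable {n g : ℕ} {S T : Finset ℕ}

def dropMax (S : Finset ℕ) : Finset ℕ := S.erase (S.sup id)

def maxGap (S : Finset ℕ) : ℕ := S.sup id - (dropMax S).sup id

def extendBy (g : ℕ) (T : Finset ℕ) : Finset ℕ := insert (T.sup id + g) T

theorem sup_extendBy (hg : 0 < g) : (extendBy g T).sup id = T.sup id + g := by
  rw [extendBy, sup_insert, id, sup_eq_left.mpr (by omega)]

theorem sup_id_add_notMem (hg : 0 < g) : T.sup id + g ∉ T := fun h => by
  have := le_sup (f := id) h
  simp only [id] at this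
  omega

theorem dropMax_extendBy (hg : 0 < g) : dropMax (extendBy g T) = T := by
  rw [dropMax, sup_extendBy hg, extendBy, erase_insert (sup_id_add_notMem hg)]

theorem maxGap_extendBy (hg : 0 < g) : maxGap (extendBy g T) = g := by
  rw [maxGap, dropMax_extendBy hg, sup_extendBy hg]
  omega

theorem extendBy_maxGap_dropMax (hS : S.Nonempty) : extendBy (maxGap S) (dropMax S) = S := by
  have hle : (dropMax S).sup id ≤ S.sup id := sup_mono (erase_subset _ _)
  rw [extendBy, maxGap, Nat.add_sub_cancel' hle, dropMax, insert_erase (sup_id_mem_of_nonempty hS)]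

theorem nonempty_of_mem_pathDomSets (hT : T ∈ pathDomSets n) (hn : 0 < n) : T.Nonempty := by
  obtain ⟨t, ht, -⟩ := (mem_pathDomSets.mp hT).2 0 hn
  exact ⟨t, ht⟩

theorem sup_bounds_of_mem_pathDomSets (hT : T ∈ pathDomSets n) (hn : 0 < n) :
    T.sup id < n ∧ n ≤ T.sup id + 2 := by
  obtain ⟨hsub, hdom⟩ := mem_pathDomSets.mp hT
  obtain ⟨t, ht, hkt⟩ := hdom (n - 1) (by omega)
  have htop := le_sup (f := id) ht
  simp only [id] at htop
  exact ⟨mem_range.mp (hsub (sup_id_mem_of_nonempty ⟨t, ht⟩)), by omega⟩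

theorem extendBy_mem_pathDomSets (hT : T ∈ pathDomSets n) (hn : 0 < n) (hg₁ : 1 ≤ g)
    (hg₃ : g ≤ 3) : extendBy g T ∈ pathDomSets (n + g) := by
  obtain ⟨hsub, hdom⟩ := mem_pathDomSets.mp hT
  obtain ⟨hlt, hle⟩ := sup_bounds_of_mem_pathDomSets hT hn
  have hb := sup_id_mem_of_nonempty (nonempty_of_mem_pathDomSets hT hn)
  refine mem_pathDomSets.mpr ⟨insert_subset (mem_range.mpr (by omega))
    (hsub.trans (range_subset_range.mpr (by omega))), fun k hk => ?_⟩
  by_cases hkn : k < n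
  · obtain ⟨t, ht, hkt⟩ := hdom k hkn
    exact ⟨t, mem_insert_of_mem ht, hkt⟩
  · by_cases hk' : k ≤ T.sup id + 1
    · exact ⟨T.sup id, mem_insert_of_mem hb, by omega, by omega⟩
    · exact ⟨T.sup id + g, mem_insert_self _ _, by omega, by omega⟩

theorem le_sup_dropMax {t : ℕ} (ht : t ∈ S) (hta : t ≠ S.sup id) : t ≤ (dropMax S).sup id :=
  le_sup (f := id) (mem_erase.mpr ⟨hta, ht⟩)

theorem sup_dropMax_lt (hS : (dropMax S).Nonempty) : (dropMax S).sup id < S.sup id := by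
  have hb := sup_id_mem_of_nonempty hS
  exact lt_of_le_of_ne (sup_mono (erase_subset _ _) : (dropMax S).sup id ≤ S.sup id)
    (ne_of_mem_erase hb)

theorem dropMax_nonempty_of_mem_pathDomSets (hS : S ∈ pathDomSets n) (hn : 4 ≤ n) :
    (dropMax S).Nonempty := by
  obtain ⟨t, ht, hkt⟩ := (mem_pathDomSets.mp hS).2 0 (by omega)
  have := (sup_bounds_of_mem_pathDomSets hS (by omega)).2
  exact ⟨t, mem_erase.mpr ⟨by omega, ht⟩⟩

theorem maxGap_mem_Icc (hS : S ∈ pathDomSets n) (hT : (dropMax S).Nonempty) :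
    maxGap S ∈ Icc 1 3 := by
  obtain ⟨hsub, hdom⟩ := mem_pathDomSets.mp hS
  have hlt := sup_dropMax_lt hT
  have ha := mem_range.mp (hsub (sup_id_mem_of_nonempty (hT.mono (erase_subset _ _))))
  rw [mem_Icc, maxGap]
  refine ⟨by omega, not_lt.mp fun hgap => ?_⟩
  -- the vertex two steps above the second largest element would be undominated
  obtain ⟨t, ht, hkt⟩ := hdom ((dropMax S).sup id + 2) (by omega)
  by_cases hta : t = S.sup id
  · omega
  · have := le_sup_dropMax ht hta
    omega

theorem dropMax_mem_pathDomSets (hS : S ∈ pathDomSets n) (hT : (dropMax S).Nonempty) :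
    dropMax S ∈ pathDomSets (n - maxGap S) := by
  obtain ⟨hsub, hdom⟩ := mem_pathDomSets.mp hS
  have hlt := sup_dropMax_lt hT
  have ha := mem_range.mp (hsub (sup_id_mem_of_nonempty (hT.mono (erase_subset _ _))))
  have hle := (sup_bounds_of_mem_pathDomSets hS (by omega)).2
  refine mem_pathDomSets.mpr ⟨fun t ht => mem_range.mpr ?_, fun k hk => ?_⟩
  · have := le_sup (f := id) ht
    rw [maxGap]
    simp only [id] at this
    omega
  · rw [maxGap] at hk
    obtain ⟨t, ht, hkt⟩ := hdom k (by omega)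
    by_cases hta : t = S.sup id
    · exact ⟨_, sup_id_mem_of_nonempty hT, by omega, by omega⟩
    · exact ⟨t, mem_erase.mpr ⟨hta, ht⟩, hkt⟩

end MaxGap

theorem sum_X_pow_card_pathDomSets {n : ℕ} (hn : 4 ≤ n) :
    ∑ S ∈ pathDomSets n, (X : ℤ[X]) ^ #S =
      ∑ g ∈ Icc 1 3, X * ∑ T ∈ pathDomSets (n - g), X ^ #T := by
  simp only [mul_sum]
  rw [sum_sigma']
  refine sum_nbij' (fun S => ⟨maxGap S, dropMax S⟩) (fun p => extendBy p.1 p.2)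
    (fun S hS => ?_) (fun ⟨g, T⟩ hT => ?_) (fun S hS => ?_) (fun ⟨g, T⟩ hT => ?_)
    (fun S hS => ?_)
  · have hT := dropMax_nonempty_of_mem_pathDomSets hS hn
    exact mem_sigma.mpr ⟨maxGap_mem_Icc hS hT, dropMax_mem_pathDomSets hS hT⟩
  · obtain ⟨⟨hg₁, hg₃⟩, hT⟩ : (1 ≤ g ∧ g ≤ 3) ∧ T ∈ pathDomSets (n - g) := by
      simpa only [mem_sigma, mem_Icc] using hT
    simpa only [Nat.sub_add_cancel (by omega : g ≤ n)] using
      extendBy_mem_pathDomSets hT (by omega) hg₁ hg₃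
  · exact extendBy_maxGap_dropMax (nonempty_of_mem_pathDomSets hS (by omega))
  · have hg : 0 < g := (mem_Icc.mp (mem_sigma.mp hT).1).1
    rw [maxGap_extendBy hg, dropMax_extendBy hg]
  · rw [dropMax, ← pow_succ', card_erase_add_one
      (sup_id_mem_of_nonempty (nonempty_of_mem_pathDomSets hS (by omega)))]

theorem domPoly_pathGraph_of_four_le {n : ℕ} (hn : 4 ≤ n) :
    domPoly (pathGraph n) = X * (domPoly (pathGraph (n - 1)) + domPoly (pathGraph (n - 2))
      + domPoly (pathGraph (n - 3))) := by
  simp only [domPoly_pathGraph, sum_X_pow_card_pathDomSets hn, sum_Icc_succ_top, Nat.one_le_ofNat,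
    Nat.reduceAdd, Icc_self, sum_singleton]
  ring

theorem pathDomSets_zero : pathDomSets 0 = {∅} := by decide

theorem pathDomSets_one : pathDomSets 1 = {{0}} := by decide

theorem pathDomSets_two : pathDomSets 2 = {{0}, {1}, {0, 1}} := by decide

theorem pathDomSets_three : pathDomSets 3 = {{1}, {0, 1}, {0, 2}, {1, 2}, {0, 1, 2}} := by decide

theorem domPoly_path_recurrence :
    domPoly (pathGraph 1) = X ∧
    domPoly (pathGraph 2) = X ^ 2 + 2 * X ∧
    domPoly (pathGraph 3) = X ^ 3 + 3 * X ^ 2 + X ∧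
    ∀ n : ℕ, 3 ≤ n →
      domPoly (pathGraph n) =
        X * (domPoly (pathGraph (n - 1)) + domPoly (pathGraph (n - 2))
          + domPoly (pathGraph (n - 3))) := by
  have h₀ : domPoly (pathGraph 0) = 1 := by simp [domPoly_pathGraph, pathDomSets_zero]
  have h₁ : domPoly (pathGraph 1) = X := by simp [domPoly_pathGraph, pathDomSets_one]
  have h₂ : domPoly (pathGraph 2) = X ^ 2 + 2 * X := by
    simp +decide only [domPoly_pathGraph, pathDomSets_two, sum_insert, mem_insert, mem_singleton,
      sum_singleton, card_insert_of_notMem, card_singleton]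
    ring
  have h₃ : domPoly (pathGraph 3) = X ^ 3 + 3 * X ^ 2 + X := by
    simp +decide only [domPoly_pathGraph, pathDomSets_three, sum_insert, mem_insert, mem_singleton,
      sum_singleton, card_insert_of_notMem, card_singleton]
    ring
  refine ⟨h₁, h₂, h₃, fun n hn => ?_⟩
  obtain rfl | hn := hn.eq_or_lt
  · rw [h₃, h₂, h₁, h₀]
    ring
  · exact domPoly_pathGraph_of_four_le hn
end

section
/- Let (a_n) be a sequence of integers satisfying a_n = -2(a_{n-1} + a_{n-2} + a_{n-3}) for n ≥ N+3. If 0 < |a_N| < |a_{N+1}| < |a_{N+2}| < |a_{N+3}| and a_N, a_{N+1}, a_{N+2}, a_{N+3} have alternating signs, then a_m ≠ 0 for all m ≥ N; moreover |a_m| is strictly increasing and the signs of a_m alternate for m ≥ N+3. -/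
theorem recurrence_nonzero (a : ℕ → ℤ) (N : ℕ)
    (hrec : ∀ n : ℕ, N + 3 ≤ n → a n = -2 * (a (n - 1) + a (n - 2) + a (n - 3)))
    (h0 : 0 < |a N|) (h1 : |a N| < |a (N + 1)|) (h2 : |a (N + 1)| < |a (N + 2)|)
    (h3 : |a (N + 2)| < |a (N + 3)|)
    (hs1 : a N * a (N + 1) < 0) (hs2 : a (N + 1) * a (N + 2) < 0)
    (hs3 : a (N + 2) * a (N + 3) < 0) :
    (∀ m : ℕ, N ≤ m → a m ≠ 0) ∧
      (∀ m : ℕ, N + 3 ≤ m → |a m| < |a (m + 1)| ∧ a m * a (m + 1) < 0) := by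
  have S : ∀ k : ℕ,
      (|a (N + k)| < |a (N + k + 1)| ∧ |a (N + k + 1)| < |a (N + k + 2)| ∧
        |a (N + k + 2)| < |a (N + k + 3)|) ∧
      (a (N + k) * a (N + k + 1) < 0 ∧ a (N + k + 1) * a (N + k + 2) < 0 ∧
        a (N + k + 2) * a (N + k + 3) < 0) := by
    intro k
    induction k with
    | zero => exact ⟨⟨h1, h2, h3⟩, hs1, hs2, hs3⟩
    | succ k ih =>
      obtain ⟨⟨m1, m2, m3⟩, p1, p2, p3⟩ := ih
      -- recurrence at N+k+3
      have e1 : a (N + k + 3) = -2 * (a (N + k + 2) + a (N + k + 1) + a (N + k)) := by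
        have h := hrec (N + k + 3) (by omega)
        have i1 : N + k + 3 - 1 = N + k + 2 := by omega
        have i2 : N + k + 3 - 2 = N + k + 1 := by omega
        have i3 : N + k + 3 - 3 = N + k := by omega
        rw [i1, i2, i3] at h
        exact h
      -- recurrence at N+k+4
      have e2 : a (N + k + 4) = -2 * (a (N + k + 3) + a (N + k + 2) + a (N + k + 1)) := by
        have h := hrec (N + k + 4) (by omega)
        have i1 : N + k + 4 - 1 = N + k + 3 := by omega
        have i2 : N + k + 4 - 2 = N + k + 2 := by omega
        have i3 : N + k + 4 - 3 = N + k + 1 := by omega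
        rw [i1, i2, i3] at h
        exact h
      have ht : a (N + k + 4) = 2 * a (N + k) - a (N + k + 3) := by linarith
      -- sign of p * s
      have h4 : 0 < (a (N + k) * a (N + k + 1)) * (a (N + k + 2) * a (N + k + 3)) :=
        mul_pos_of_neg_of_neg p1 p3
      have hps : a (N + k) * a (N + k + 3) < 0 := by nlinarith [h4, p2]
      have hst : a (N + k + 3) * a (N + k + 4) < 0 := by
        rw [ht]; nlinarith [hps, sq_nonneg (a (N + k + 3))]
      have hab : |a (N + k + 3)| < |a (N + k + 4)| := by
        rcases mul_neg_iff.mp hps with ⟨hp, hs⟩ | ⟨hp, hs⟩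
        · rw [ht, abs_of_neg hs, abs_of_pos (by linarith : (0:ℤ) < 2 * a (N + k) - a (N + k + 3))]
          linarith
        · rw [ht, abs_of_pos hs, abs_of_neg (by linarith : 2 * a (N + k) - a (N + k + 3) < (0:ℤ))]
          linarith
      exact ⟨⟨m2, m3, hab⟩, p2, p3, hst⟩
  constructor
  · intro m hm
    obtain ⟨k, rfl⟩ := Nat.exists_eq_add_of_le hm
    cases k with
    | zero => exact abs_pos.mp h0
    | succ k =>
      have hk := (S k).2.1
      have : a (N + k + 1) ≠ 0 := by
        intro h; rw [h, mul_zero] at hk; exact absurd hk (lt_irrefl 0)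
      exact this
  · intro m hm
    obtain ⟨k, rfl⟩ : ∃ k, m = N + k := ⟨m - N, by omega⟩
    exact ⟨(S k).1.1, (S k).2.1⟩
end

section
/- For every n ≥ 9, -2 is not a root of the domination polynomial of the path P_n, i.e., D(P_n, -2) ≠ 0. -/
open SimpleGraph Polynomial Finset

namespace DomAux

/-- all vertices except possibly the last of the path `0..k-1` are dominated by `S` -/
def condP (k : ℕ) (S : Finset ℕ) : Prop :=
  ∀ i, i + 1 < k → (i ∈ S ∨ i + 1 ∈ S ∨ ∃ j, j + 1 = i ∧ j ∈ S)

def condA (k : ℕ) (S : Finset ℕ) : Prop :=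
  condP k S ∧ (∀ j, j + 1 = k → j ∉ S) ∧ (∀ j, j + 2 = k → j ∉ S)

def condB (k : ℕ) (S : Finset ℕ) : Prop :=
  condP k S ∧ (∀ j, j + 1 = k → j ∉ S) ∧ (∃ j, j + 2 = k ∧ j ∈ S)

def condC (k : ℕ) (S : Finset ℕ) : Prop :=
  condP k S ∧ (∃ j, j + 1 = k ∧ j ∈ S)

open Classical in
noncomputable def SA (k : ℕ) : ℤ :=
  ∑ S ∈ (Finset.range k).powerset, if condA k S then (-2 : ℤ) ^ S.card else 0

open Classical in
noncomputable def SB (k : ℕ) : ℤ :=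
  ∑ S ∈ (Finset.range k).powerset, if condB k S then (-2 : ℤ) ^ S.card else 0

open Classical in
noncomputable def SC (k : ℕ) : ℤ :=
  ∑ S ∈ (Finset.range k).powerset, if condC k S then (-2 : ℤ) ^ S.card else 0

lemma notmem (k : ℕ) {S : Finset ℕ} (hS : S ⊆ Finset.range k) {m : ℕ} (hm : k ≤ m) :
    m ∉ S := fun h => by have := Finset.mem_range.mp (hS h); omega

lemma AB {k : ℕ} (hk : 1 ≤ k) {S : Finset ℕ} (hS : S ⊆ Finset.range k) :
    condA (k + 1) S ↔ condB k S := by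
  constructor
  · rintro ⟨hP, h1, h2⟩
    refine ⟨fun i hi => hP i (by omega), fun j hj => h2 j (by omega), ?_⟩
    rcases hP (k - 1) (by omega) with h | h | ⟨j, hj, hjS⟩
    · exact absurd h (h2 (k - 1) (by omega))
    · have hkk : k - 1 + 1 = k := by omega
      rw [hkk] at h
      exact absurd h (notmem k hS le_rfl)
    · exact ⟨j, by omega, hjS⟩
  · rintro ⟨hP, h1, j, hj2, hjS⟩
    refine ⟨?_, ?_, ?_⟩
    · intro i hi
      by_cases h : i + 1 < k
      · exact hP i h
      · exact Or.inr (Or.inr ⟨j, by omega, hjS⟩)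
    · intro j' hj'
      exact notmem k hS (by omega)
    · intro j' hj'
      exact h1 j' (by omega)

lemma BC {k : ℕ} {S : Finset ℕ} (hS : S ⊆ Finset.range k) :
    condB (k + 1) S ↔ condC k S := by
  constructor
  · rintro ⟨hP, h1, j, hj2, hjS⟩
    exact ⟨fun i hi => hP i (by omega), j, by omega, hjS⟩
  · rintro ⟨hP, j, hj, hjS⟩
    refine ⟨?_, ?_, ⟨j, by omega, hjS⟩⟩
    · intro i hi
      by_cases h : i + 1 < k
      · exact hP i h
      · have : i = j := by omega
        subst this
        exact Or.inl hjS
    · intro j' hj'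
      exact notmem k hS (by omega)

lemma C_not {k : ℕ} {S : Finset ℕ} (hS : S ⊆ Finset.range k) :
    ¬ condC (k + 1) S := by
  rintro ⟨-, j, hj, hjS⟩
  exact notmem k hS (by omega) hjS

lemma A_not_insert {k : ℕ} (S : Finset ℕ) : ¬ condA (k + 1) (insert k S) := by
  rintro ⟨-, h1, -⟩
  exact h1 k rfl (Finset.mem_insert_self k S)

lemma B_not_insert {k : ℕ} (S : Finset ℕ) : ¬ condB (k + 1) (insert k S) := by
  rintro ⟨-, h1, -⟩
  exact h1 k rfl (Finset.mem_insert_self k S)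

lemma C_insert {k : ℕ} {S : Finset ℕ} (hS : S ⊆ Finset.range k) :
    condC (k + 1) (insert k S) ↔ condP k S := by
  constructor
  · rintro ⟨hP, -⟩
    intro i hi
    rcases hP i (by omega) with h | h | ⟨j, hj, hjS⟩
    · rcases Finset.mem_insert.mp h with h | h
      · omega
      · exact Or.inl h
    · rcases Finset.mem_insert.mp h with h | h
      · omega
      · exact Or.inr (Or.inl h)
    · rcases Finset.mem_insert.mp hjS with h | h
      · omega
      · exact Or.inr (Or.inr ⟨j, hj, h⟩)
  · intro hP
    refine ⟨?_, ⟨k, rfl, Finset.mem_insert_self k S⟩⟩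
    intro i hi
    by_cases h : i + 1 < k
    · rcases hP i h with h' | h' | ⟨j, hj, hjS⟩
      · exact Or.inl (Finset.mem_insert_of_mem h')
      · exact Or.inr (Or.inl (Finset.mem_insert_of_mem h'))
      · exact Or.inr (Or.inr ⟨j, hj, Finset.mem_insert_of_mem hjS⟩)
    · have : i + 1 = k := by omega
      exact Or.inr (Or.inl (by rw [this]; exact Finset.mem_insert_self k S))

lemma P_iff (k : ℕ) (S : Finset ℕ) :
    condP k S ↔ condA k S ∨ condB k S ∨ condC k S := by
  constructor
  · intro hP
    by_cases hc : ∃ j, j + 1 = k ∧ j ∈ S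
    · exact Or.inr (Or.inr ⟨hP, hc⟩)
    · push_neg at hc
      by_cases hb : ∃ j, j + 2 = k ∧ j ∈ S
      · exact Or.inr (Or.inl ⟨hP, fun j hj => hc j hj, hb⟩)
      · push_neg at hb
        exact Or.inl ⟨hP, fun j hj => hc j hj, fun j hj => hb j hj⟩
  · rintro (⟨h, -⟩ | ⟨h, -⟩ | ⟨h, -⟩) <;> exact h

lemma AB_disj (k : ℕ) (S : Finset ℕ) : ¬ (condA k S ∧ condB k S) := by
  rintro ⟨⟨-, -, hA⟩, ⟨-, -, j, hj, hjS⟩⟩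
  exact hA j hj hjS

lemma AC_disj (k : ℕ) (S : Finset ℕ) : ¬ (condA k S ∧ condC k S) := by
  rintro ⟨⟨-, hA, -⟩, ⟨-, j, hj, hjS⟩⟩
  exact hA j hj hjS

lemma BC_disj (k : ℕ) (S : Finset ℕ) : ¬ (condB k S ∧ condC k S) := by
  rintro ⟨⟨-, hA, -⟩, ⟨-, j, hj, hjS⟩⟩
  exact hA j hj hjS

end DomAux

namespace DomAux

open Classical

lemma SA_succ {k : ℕ} (hk : 1 ≤ k) : SA (k + 1) = SB k := by
  unfold SA SB
  rw [Finset.range_add_one, Finset.sum_powerset_insert (by simp)]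
  have h2 : (∑ S ∈ (Finset.range k).powerset,
      if condA (k + 1) (insert k S) then (-2 : ℤ) ^ (insert k S).card else 0) = 0 := by
    refine Finset.sum_eq_zero fun S hS => if_neg (A_not_insert S)
  rw [h2, add_zero]
  refine Finset.sum_congr rfl fun S hS => ?_
  rw [Finset.mem_powerset] at hS
  by_cases h : condB k S
  · rw [if_pos ((AB hk hS).mpr h), if_pos h]
  · rw [if_neg (fun hc => h ((AB hk hS).mp hc)), if_neg h]

lemma SB_succ (k : ℕ) : SB (k + 1) = SC k := by
  unfold SB SC
  rw [Finset.range_add_one, Finset.sum_powerset_insert (by simp)]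
  have h2 : (∑ S ∈ (Finset.range k).powerset,
      if condB (k + 1) (insert k S) then (-2 : ℤ) ^ (insert k S).card else 0) = 0 := by
    refine Finset.sum_eq_zero fun S hS => if_neg (B_not_insert S)
  rw [h2, add_zero]
  refine Finset.sum_congr rfl fun S hS => ?_
  rw [Finset.mem_powerset] at hS
  by_cases h : condC k S
  · rw [if_pos ((BC hS).mpr h), if_pos h]
  · rw [if_neg (fun hc => h ((BC hS).mp hc)), if_neg h]

lemma SC_succ (k : ℕ) : SC (k + 1) = -2 * (SA k + SB k + SC k) := by
  unfold SA SB SC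
  rw [Finset.range_add_one, Finset.sum_powerset_insert (by simp)]
  have h1 : (∑ S ∈ (Finset.range k).powerset,
      if condC (k + 1) S then (-2 : ℤ) ^ S.card else 0) = 0 := by
    refine Finset.sum_eq_zero fun S hS => if_neg (C_not (Finset.mem_powerset.mp hS))
  rw [h1, zero_add]
  have key : ∀ S ∈ (Finset.range k).powerset,
      (if condC (k + 1) (insert k S) then (-2 : ℤ) ^ (insert k S).card else 0) =
      -2 * ((if condA k S then (-2 : ℤ) ^ S.card else 0) +
        (if condB k S then (-2 : ℤ) ^ S.card else 0) +
        (if condC k S then (-2 : ℤ) ^ S.card else 0)) := by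
    intro S hS
    rw [Finset.mem_powerset] at hS
    have hkS : k ∉ S := notmem k hS le_rfl
    have hcard : (insert k S).card = S.card + 1 := Finset.card_insert_of_notMem hkS
    by_cases hP : condP k S
    · rw [if_pos ((C_insert hS).mpr hP), hcard, pow_succ]
      rcases (P_iff k S).mp hP with hA | hB | hC
      · rw [if_pos hA, if_neg (fun h => AB_disj k S ⟨hA, h⟩),
          if_neg (fun h => AC_disj k S ⟨hA, h⟩)]
        ring
      · rw [if_neg (fun h => AB_disj k S ⟨h, hB⟩), if_pos hB,
          if_neg (fun h => BC_disj k S ⟨hB, h⟩)]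
        ring
      · rw [if_neg (fun h => AC_disj k S ⟨h, hC⟩), if_neg (fun h => BC_disj k S ⟨h, hC⟩),
          if_pos hC]
        ring
    · rw [if_neg (fun h => hP ((C_insert hS).mp h)),
        if_neg (fun h => hP ((P_iff k S).mpr (Or.inl h))),
        if_neg (fun h => hP ((P_iff k S).mpr (Or.inr (Or.inl h)))),
        if_neg (fun h => hP ((P_iff k S).mpr (Or.inr (Or.inr h))))]
      ring
  rw [Finset.sum_congr rfl key, ← Finset.mul_sum, Finset.sum_add_distrib, Finset.sum_add_distrib]

lemma condP_one (S : Finset ℕ) : condP 1 S := fun i hi => absurd hi (by omega)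

lemma base : SA 1 = 1 ∧ SB 1 = 0 ∧ SC 1 = -2 := by
  have hpow : (Finset.range 1).powerset = {∅, {0}} := by decide
  have hne : (∅ : Finset ℕ) ≠ {0} := by decide
  refine ⟨?_, ?_, ?_⟩
  · rw [SA, hpow, Finset.sum_pair hne, if_pos, if_neg]
    · simp
    · rintro ⟨-, h, -⟩; exact h 0 rfl (Finset.mem_singleton_self 0)
    · exact ⟨condP_one ∅, fun j hj => by simp, fun j hj => by omega⟩
  · rw [SB, hpow, Finset.sum_pair hne, if_neg, if_neg]
    · simp
    · rintro ⟨-, -, j, hj, -⟩; omega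
    · rintro ⟨-, -, j, hj, -⟩; omega
  · rw [SC, hpow, Finset.sum_pair hne, if_neg, if_pos]
    · simp
    · exact ⟨condP_one {0}, 0, rfl, Finset.mem_singleton_self 0⟩
    · rintro ⟨-, j, hj, hjS⟩
      have : j = 0 := by omega
      subst this
      simp at hjS

def step (p : ℤ × ℤ × ℤ) : ℤ × ℤ × ℤ := (p.2.1, p.2.2, -2 * (p.1 + p.2.1 + p.2.2))

def trip (k : ℕ) : ℤ × ℤ × ℤ := step^[k - 1] (1, 0, -2)

lemma trip_succ {k : ℕ} (hk : 1 ≤ k) : trip (k + 1) = step (trip k) := by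
  unfold trip
  have : k + 1 - 1 = (k - 1) + 1 := by omega
  rw [this, Function.iterate_succ_apply']

lemma trip_eq {k : ℕ} (hk : 1 ≤ k) : (SA k, SB k, SC k) = trip k := by
  induction k, hk using Nat.le_induction with
  | base =>
    have := base
    simp only [trip]
    simp [this.1, this.2.1, this.2.2, step]
  | succ k hk ih =>
    rw [trip_succ hk, ← ih, SA_succ hk, SB_succ, SC_succ, step]

end DomAux

namespace DomAux

lemma trip_inv {k : ℕ} (hk : 9 ≤ k) :
    ∃ x y z : ℤ, trip k = ((-1) ^ k * 8 * x, -((-1) ^ k * 8 * y), (-1) ^ k * 8 * z) ∧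
      0 < x ∧ x ≤ y ∧ y < z ∧ 2 * y < z + 2 * x := by
  induction k, hk using Nat.le_induction with
  | base =>
    refine ⟨1, 1, 2, ?_, by norm_num⟩
    show step^[8] (1, 0, -2) = _
    norm_num [Function.iterate_succ_apply', step]
  | succ k hk ih =>
    obtain ⟨x, y, z, heq, hx, hxy, hyz, hineq⟩ := ih
    refine ⟨y, z, 2 * (x - y + z), ?_, by linarith, by linarith, by linarith, by linarith⟩
    rw [trip_succ (by omega), heq, step]
    have : ((-1 : ℤ)) ^ (k + 1) = -(-1) ^ k := by rw [pow_succ]; ring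
    rw [this]
    simp only [Prod.mk.injEq]
    refine ⟨by ring, by ring, by ring⟩

lemma SBC_ne {k : ℕ} (hk : 9 ≤ k) : SB k + SC k ≠ 0 := by
  obtain ⟨x, y, z, heq, hx, hxy, hyz, hineq⟩ := trip_inv hk
  have h1 : (SA k, SB k, SC k) = trip k := trip_eq (by omega)
  rw [heq] at h1
  have hB : SB k = -((-1) ^ k * 8 * y) := congrArg (fun p => p.2.1) h1
  have hC : SC k = (-1) ^ k * 8 * z := congrArg (fun p => p.2.2) h1
  rw [hB, hC]
  have : -((-1 : ℤ) ^ k * 8 * y) + (-1) ^ k * 8 * z = (-1) ^ k * (8 * (z - y)) := by ring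
  rw [this]
  apply mul_ne_zero
  · exact pow_ne_zero _ (by norm_num)
  · have : (0 : ℤ) < 8 * (z - y) := by linarith
    omega

end DomAux

namespace DomAux

open SimpleGraph Polynomial

def domN (n : ℕ) (T : Finset ℕ) : Prop :=
  ∀ i, i < n → (i ∈ T ∨ i + 1 ∈ T ∨ ∃ j, j + 1 = i ∧ j ∈ T)

lemma domN_iff {n : ℕ} (hn : 1 ≤ n) {T : Finset ℕ} (hT : T ⊆ Finset.range n) :
    domN n T ↔ condB n T ∨ condC n T := by
  constructor
  · intro h
    have hP : condP n T := fun i hi => h i (by omega)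
    rcases h (n - 1) (by omega) with h1 | h1 | ⟨j, hj, hjT⟩
    · exact Or.inr ⟨hP, n - 1, by omega, h1⟩
    · have : n - 1 + 1 = n := by omega
      rw [this] at h1
      exact absurd h1 (notmem n hT le_rfl)
    · by_cases hc : ∃ j', j' + 1 = n ∧ j' ∈ T
      · exact Or.inr ⟨hP, hc⟩
      · push_neg at hc
        exact Or.inl ⟨hP, fun j' hj' => hc j' hj', j, by omega, hjT⟩
  · rintro (⟨hP, h1, j, hj, hjT⟩ | ⟨hP, j, hj, hjT⟩) <;> intro i hi
    · by_cases h : i + 1 < n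
      · exact hP i h
      · exact Or.inr (Or.inr ⟨j, by omega, hjT⟩)
    · by_cases h : i + 1 < n
      · exact hP i h
      · have : i = j := by omega
        subst this
        exact Or.inl hjT

lemma dominating_iff {n : ℕ} (S : Finset (Fin n)) :
    (∀ v : Fin n, v ∈ S ∨ ∃ u ∈ S, (pathGraph n).Adj u v) ↔ domN n (S.image Fin.val) := by
  constructor
  · intro h i hi
    rcases h ⟨i, hi⟩ with hv | ⟨u, hu, hadj⟩
    · exact Or.inl (Finset.mem_image_of_mem _ hv)
    · rcases pathGraph_adj.mp hadj with h' | h'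
      · exact Or.inr (Or.inr ⟨u.val, h', Finset.mem_image_of_mem _ hu⟩)
      · refine Or.inr (Or.inl ?_)
        rw [show (i : ℕ) + 1 = u.val from h'.symm ▸ rfl]
        exact Finset.mem_image_of_mem _ hu
  · intro h v
    rcases h v.val v.isLt with hi | hi | ⟨j, hj, hjT⟩
    · rcases Finset.mem_image.mp hi with ⟨u, hu, hval⟩
      have : u = v := Fin.ext hval
      exact Or.inl (this ▸ hu)
    · rcases Finset.mem_image.mp hi with ⟨u, hu, hval⟩
      exact Or.inr ⟨u, hu, pathGraph_adj.mpr (Or.inr (by omega))⟩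
    · rcases Finset.mem_image.mp hjT with ⟨u, hu, hval⟩
      exact Or.inr ⟨u, hu, pathGraph_adj.mpr (Or.inl (by omega))⟩

open Classical in
lemma sum_dom_eq {n : ℕ} (hn : 1 ≤ n) :
    (∑ S ∈ Finset.univ.filter
        (fun S : Finset (Fin n) => ∀ v : Fin n, v ∈ S ∨ ∃ u ∈ S, (pathGraph n).Adj u v),
      (-2 : ℤ) ^ S.card) = SB n + SC n := by
  have step1 : (∑ S ∈ Finset.univ.filter
        (fun S : Finset (Fin n) => ∀ v : Fin n, v ∈ S ∨ ∃ u ∈ S, (pathGraph n).Adj u v),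
      (-2 : ℤ) ^ S.card) =
      ∑ T ∈ (Finset.range n).powerset.filter (fun T => condB n T ∨ condC n T),
      (-2 : ℤ) ^ T.card := by
    refine Finset.sum_nbij' (fun S => S.image Fin.val)
      (fun T => Finset.univ.filter (fun v : Fin n => v.val ∈ T)) ?_ ?_ ?_ ?_ ?_
    · intro S hS
      rw [Finset.mem_filter] at hS
      rw [Finset.mem_filter, Finset.mem_powerset]
      have hsub : S.image Fin.val ⊆ Finset.range n := by
        intro m hm
        rcases Finset.mem_image.mp hm with ⟨u, -, hval⟩
        exact Finset.mem_range.mpr (hval ▸ u.isLt)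
      exact ⟨hsub, (domN_iff hn hsub).mp ((dominating_iff S).mp hS.2)⟩
    · intro T hT
      rw [Finset.mem_filter, Finset.mem_powerset] at hT
      rw [Finset.mem_filter]
      refine ⟨Finset.mem_univ _, ?_⟩
      rw [dominating_iff]
      have himg : (Finset.univ.filter (fun v : Fin n => v.val ∈ T)).image Fin.val = T := by
        ext i
        simp only [Finset.mem_image, Finset.mem_filter, Finset.mem_univ, true_and]
        constructor
        · rintro ⟨v, hv, rfl⟩; exact hv
        · intro hi
          exact ⟨⟨i, Finset.mem_range.mp (hT.1 hi)⟩, hi, rfl⟩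
      rw [himg]
      exact (domN_iff hn hT.1).mpr hT.2
    · intro S hS
      ext v
      simp only [Finset.mem_filter, Finset.mem_univ, true_and, Finset.mem_image]
      constructor
      · rintro ⟨u, hu, hval⟩
        exact (Fin.ext hval : u = v) ▸ hu
      · intro hv; exact ⟨v, hv, rfl⟩
    · intro T hT
      rw [Finset.mem_filter, Finset.mem_powerset] at hT
      ext i
      simp only [Finset.mem_image, Finset.mem_filter, Finset.mem_univ, true_and]
      constructor
      · rintro ⟨v, hv, rfl⟩; exact hv
      · intro hi
        exact ⟨⟨i, Finset.mem_range.mp (hT.1 hi)⟩, hi, rfl⟩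
    · intro S hS
      rw [Finset.card_image_of_injective S Fin.val_injective]
  rw [step1, Finset.sum_filter, SB, SC, ← Finset.sum_add_distrib]
  refine Finset.sum_congr rfl fun T hT => ?_
  by_cases hB : condB n T
  · rw [if_pos (Or.inl hB), if_pos hB, if_neg (fun h => BC_disj n T ⟨hB, h⟩), add_zero]
  · by_cases hC : condC n T
    · rw [if_pos (Or.inr hC), if_neg hB, if_pos hC, zero_add]
    · rw [if_neg (by tauto), if_neg hB, if_neg hC, add_zero]

end DomAux

namespace DomAux

open Classical in
lemma eval_eq (n : ℕ) : (domPoly (pathGraph n)).eval (-2) =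
    ∑ S ∈ Finset.univ.filter
      (fun S : Finset (Fin n) => ∀ v : Fin n, v ∈ S ∨ ∃ u ∈ S, (pathGraph n).Adj u v),
    (-2 : ℤ) ^ S.card := by
  rw [domPoly, Polynomial.eval_finset_sum]
  simp only [Polynomial.eval_mul, Polynomial.eval_C, Polynomial.eval_pow, Polynomial.eval_X]
  rw [← Finset.sum_fiberwise_of_maps_to (g := Finset.card)
    (t := Finset.range (Fintype.card (Fin n) + 1))
    (fun S _ => Finset.mem_range.mpr (Nat.lt_succ_of_le (Finset.card_le_univ S)))]
  refine Finset.sum_congr rfl fun i hi => ?_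
  rw [Finset.sum_congr rfl (fun S hS => by rw [(Finset.mem_filter.mp hS).2] :
    ∀ S ∈ (Finset.univ.filter
      (fun S : Finset (Fin n) => ∀ v : Fin n, v ∈ S ∨ ∃ u ∈ S, (pathGraph n).Adj u v)).filter
      (fun S => S.card = i), (-2 : ℤ) ^ S.card = (-2 : ℤ) ^ i)]
  rw [Finset.sum_const, nsmul_eq_mul, domCount]
  congr 1
  norm_cast
  apply congrArg
  ext S
  simp only [Finset.mem_filter, Finset.mem_univ, true_and]
  tauto

end DomAux

theorem domPoly_path_neg_two_ne_zero (n : ℕ) (hn : 9 ≤ n) :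
    (domPoly (pathGraph n)).eval (-2) ≠ 0 := by
  rw [DomAux.eval_eq, DomAux.sum_dom_eq (by omega : 1 ≤ n)]
  exact DomAux.SBC_ne hn
end

section
/- If F is a forest, then D(F, -1) ∈ {1, -1}. In particular D(P_n, -1) ∈ {1, -1} for all n ≥ 1. -/
/-!
Evaluated at `-1`, the domination polynomial is the signed count `∑ (-1)^|S|` over dominating
sets `S`. Let `a` be a leaf of `G` with neighbour `b`. Among the dominating sets containing `b`,
adding or removing `a` is a sign-reversing involution, so they cancel. A dominating set avoiding
`b` must contain `a`, and these sets are exactly `{a} ∪ T` with `T` dominating `G - {a, b}`.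
Hence `D(G, -1) = -D(G - {a, b}, -1)`. Every forest with an edge has a leaf, so removing leaves
reduces a forest to an edgeless graph on `m` vertices, whose only dominating set is the whole
vertex set, giving `(-1)^m`.
-/

open SimpleGraph Polynomial Finset

theorem Finset.sum_neg_one_pow_card_eq_zero {α R : Type*} [DecidableEq α] [Ring R]
    {𝒮 : Finset (Finset α)} (a : α) (h : ∀ S ∈ 𝒮, insert a S ∈ 𝒮 ∧ S.erase a ∈ 𝒮) :
    ∑ S ∈ 𝒮, (-1 : R) ^ #S = 0 := by
  refine sum_involution (fun S _ ↦ if a ∈ S then S.erase a else insert a S) ?_ ?_ ?_ ?_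
  · intro S _
    split_ifs with ha
    · rw [← card_erase_add_one ha, pow_succ]; simp
    · rw [card_insert_of_notMem ha, pow_succ]; simp
  · intro S _ _
    split_ifs with ha <;> simp [ha]
  · intro S hS
    split_ifs
    exacts [(h S hS).2, (h S hS).1]
  · intro S _
    by_cases ha : a ∈ S <;> simp [ha]

namespace SimpleGraph

variable {V : Type*} {G : SimpleGraph V}

variable (G) in
def IsDominating (S : Finset V) : Prop :=
  ∀ v, v ∈ S ∨ ∃ u ∈ S, G.Adj u v

open Classical in
variable (G) in
noncomputable def dominatingSets [Fintype V] : Finset (Finset V) :=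
  univ.filter G.IsDominating

@[simp]
lemma mem_dominatingSets [Fintype V] {S : Finset V} :
    S ∈ G.dominatingSets ↔ G.IsDominating S := by
  simp [dominatingSets]

lemma IsDominating.mono {S T : Finset V} (hS : G.IsDominating S) (hST : S ⊆ T) :
    G.IsDominating T :=
  fun v ↦ (hS v).imp (@hST v) fun ⟨u, hu, huv⟩ ↦ ⟨u, hST hu, huv⟩

@[simp]
lemma isDominating_bot_iff [Fintype V] {S : Finset V} :
    (⊥ : SimpleGraph V).IsDominating S ↔ S = univ := by
  simp [IsDominating, eq_univ_iff_forall]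

lemma domPoly_eval [Fintype V] [DecidableEq V] (x : ℤ) :
    (domPoly G).eval x = ∑ S ∈ G.dominatingSets, x ^ #S := by
  rw [domPoly, eval_finsetSum, ← sum_fiberwise_of_maps_to (g := card)
    (t := range (Fintype.card V + 1)) fun S _ ↦ by simpa [Nat.lt_succ_iff] using card_le_univ S]
  refine sum_congr rfl fun i _ ↦ ?_
  have hcount : #{S ∈ G.dominatingSets | #S = i} = domCount G i := by
    rw [domCount, dominatingSets, filter_filter]
    congr 1
    ext S
    simp only [mem_filter, mem_univ, true_and]
    exact and_comm
  rw [sum_congr rfl fun S hS ↦ by rw [(mem_filter.1 hS).2], sum_const, hcount]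
  simp

lemma domPoly_bot_eval [Fintype V] [DecidableEq V] (x : ℤ) :
    (domPoly (⊥ : SimpleGraph V)).eval x = x ^ Fintype.card V := by
  rw [domPoly_eval, show (⊥ : SimpleGraph V).dominatingSets = {univ} by ext; simp]
  simp

section Pendant

variable {a b : V}

lemma adj_iff_of_neighborSet_eq_singleton (ha : G.neighborSet a = {b}) {w : V} :
    G.Adj a w ↔ w = b := by
  rw [← mem_neighborSet, ha, Set.mem_singleton_iff]

lemma isDominating_erase_iff_of_neighborSet_eq_singleton [DecidableEq V]
    (ha : G.neighborSet a = {b}) {S : Finset V} (hb : b ∈ S) :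
    G.IsDominating (S.erase a) ↔ G.IsDominating S := by
  have hab : G.Adj a b := (adj_iff_of_neighborSet_eq_singleton ha).2 rfl
  refine ⟨fun h ↦ h.mono (erase_subset a S), fun h v ↦ ?_⟩
  by_cases hva : v = a
  · exact .inr ⟨b, mem_erase.2 ⟨hab.ne', hb⟩, hva ▸ hab.symm⟩
  rcases h v with hv | ⟨u, hu, huv⟩
  · exact .inl (mem_erase.2 ⟨hva, hv⟩)
  by_cases hua : u = a
  · subst hua
    exact .inl (mem_erase.2 ⟨hva, (adj_iff_of_neighborSet_eq_singleton ha).1 huv ▸ hb⟩)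
  · exact .inr ⟨u, mem_erase.2 ⟨hua, hu⟩, huv⟩

lemma IsDominating.mem_of_neighborSet_eq_singleton (ha : G.neighborSet a = {b})
    {S : Finset V} (hS : G.IsDominating S) (hb : b ∉ S) : a ∈ S := by
  rcases hS a with h | ⟨u, hu, hua⟩
  · exact h
  · exact absurd ((adj_iff_of_neighborSet_eq_singleton ha).1 hua.symm ▸ hu) hb

lemma isDominating_insert_map_iff_of_neighborSet_eq_singleton [DecidableEq V]
    (ha : G.neighborSet a = {b}) {T : Finset ↥({a, b}ᶜ : Set V)} :
    G.IsDominating (insert a (T.map (Function.Embedding.subtype _))) ↔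
      (G.induce ({a, b}ᶜ : Set V)).IsDominating T := by
  have hab : G.Adj a b := (adj_iff_of_neighborSet_eq_singleton ha).2 rfl
  constructor
  · intro h v
    have hv' := v.2
    simp only [Set.mem_compl_iff, Set.mem_insert_iff, Set.mem_singleton_iff, not_or] at hv'
    rcases h v with hv | ⟨u, hu, huv⟩
    · rcases mem_insert.1 hv with hva | hv
      · exact absurd hva hv'.1
      · exact .inl ((mem_map' _).1 hv)
    · rcases mem_insert.1 hu with rfl | hu
      · exact absurd ((adj_iff_of_neighborSet_eq_singleton ha).1 huv) hv'.2
      · obtain ⟨u', hu', rfl⟩ := mem_map.1 hu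
        exact .inr ⟨u', hu', huv⟩
  · intro h v
    by_cases hva : v = a
    · subst hva
      exact .inl (mem_insert_self _ _)
    by_cases hvb : v = b
    · subst hvb
      exact .inr ⟨a, mem_insert_self a _, hab⟩
    rcases h ⟨v, by simp [hva, hvb]⟩ with hv | ⟨u, hu, huv⟩
    · exact .inl (mem_insert_of_mem (mem_map_of_mem _ hv))
    · exact .inr ⟨u, mem_insert_of_mem (mem_map_of_mem _ hu), huv⟩

lemma domPoly_eval_neg_one_of_neighborSet_eq_singleton [Fintype V] [DecidableEq V]
    (ha : G.neighborSet a = {b}) :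
    (domPoly G).eval (-1) = -(domPoly (G.induce ({a, b}ᶜ : Set V))).eval (-1) := by
  have hab : G.Adj a b := (adj_iff_of_neighborSet_eq_singleton ha).2 rfl
  set s : Set V := {a, b}ᶜ
  set ι : s ↪ V := Function.Embedding.subtype _
  have hnotMem (T : Finset s) : a ∉ T.map ι ∧ b ∉ T.map ι := by
    simp [ι, s]
  rw [domPoly_eval, domPoly_eval, ← sum_filter_add_sum_filter_not _ (b ∈ ·)]
  have hcancel : ∑ S ∈ G.dominatingSets with b ∈ S, (-1 : ℤ) ^ #S = 0 := by
    refine sum_neg_one_pow_card_eq_zero a fun S hS ↦ ?_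
    simp only [mem_filter, mem_dominatingSets] at hS ⊢
    exact ⟨⟨hS.1.mono (subset_insert a S), mem_insert_of_mem hS.2⟩,
      (isDominating_erase_iff_of_neighborSet_eq_singleton ha hS.2).2 hS.1,
      mem_erase.2 ⟨hab.ne', hS.2⟩⟩
  rw [hcancel, zero_add, ← sum_neg_distrib]
  symm
  refine sum_bij (fun T _ ↦ insert a (T.map ι)) (fun T hT ↦ ?_) (fun T₁ _ T₂ _ h ↦ ?_)
    (fun S hS ↦ ?_) (fun T _ ↦ ?_)
  · simp only [mem_filter, mem_dominatingSets, mem_insert, hab.ne', (hnotMem T).2] at hT ⊢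
    exact ⟨(isDominating_insert_map_iff_of_neighborSet_eq_singleton ha).2 hT, by simp⟩
  · have := congrArg (·.erase a) h
    simpa [erase_insert (hnotMem _).1] using this
  · simp only [mem_filter, mem_dominatingSets] at hS
    have haS := hS.1.mem_of_neighborSet_eq_singleton ha hS.2
    have hmap : ((S.erase a).subtype (· ∈ s)).map ι = S.erase a :=
      subtype_map_of_mem fun w hw ↦ by
        simp [s, (mem_erase.1 hw).1, ne_of_mem_of_not_mem (mem_of_mem_erase hw) hS.2]
    refine ⟨(S.erase a).subtype (· ∈ s), ?_, by rw [hmap, insert_erase haS]⟩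
    rw [mem_dominatingSets, ← isDominating_insert_map_iff_of_neighborSet_eq_singleton ha, hmap,
      insert_erase haS]
    exact hS.1
  · rw [card_insert_of_notMem (hnotMem T).1, card_map, pow_succ, mul_neg_one]

end Pendant

lemma IsAcyclic.exists_neighborSet_eq_singleton [Finite V] (hG : G.IsAcyclic) {x y : V}
    (hxy : G.Adj x y) : ∃ a b, G.neighborSet a = {b} := by
  have : Nonempty V := ⟨x⟩
  obtain ⟨u, v, p, hp, hmax⟩ := Walk.exists_isPath_forall_isPath_length_le_length G
  have hnil : ¬p.Nil := by
    have := hmax x y (.cons hxy .nil) (by simp [hxy.ne])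
    rw [Walk.not_nil_iff_lt_length]
    simp only [Walk.length_cons, Walk.length_nil] at this
    omega
  refine ⟨u, p.snd, Set.eq_singleton_iff_unique_mem.2 ⟨p.adj_snd hnil, fun w huw ↦ ?_⟩⟩
  refine hG.eq_snd_of_adj_start hp huw (not_not.1 fun hw ↦ ?_)
  simpa using hmax _ _ (.cons huw.symm p) (hp.cons hw)

lemma pathGraph_isAcyclic (n : ℕ) : (pathGraph n).IsAcyclic := by
  refine isAcyclic_iff_forall_adj_isBridge.2 fun u v huv ↦ ?_
  wlog h : u.val + 1 = v.val generalizing u v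
  · rw [Sym2.eq_swap]
    exact this v u huv.symm ((pathGraph_adj.1 huv).resolve_left h)
  refine isBridge_iff_forall_walk_mem_edges.2 fun p ↦ ?_
  have hv : v ∉ Set.Iic u := by rw [Set.mem_Iic, Fin.le_def]; omega
  obtain ⟨d, hd, hfst, hsnd⟩ := p.exists_boundary_dart _ (Set.mem_Iic.2 le_rfl) hv
  have hadj := pathGraph_adj.1 d.adj
  rw [Set.mem_Iic, Fin.le_def] at hfst
  rw [Set.mem_Iic, Fin.le_def, not_le] at hsnd
  have hdu : d.fst = u := Fin.ext (by omega)
  have hdv : d.snd = v := Fin.ext (by omega)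
  have : d.edge = s(u, v) := by rw [Dart.edge, ← hdu, ← hdv]
  exact this ▸ List.mem_map_of_mem hd

theorem IsAcyclic.isUnit_domPoly_eval_neg_one [Fintype V] [DecidableEq V] (hG : G.IsAcyclic) :
    IsUnit ((domPoly G).eval (-1)) := by
  induction h : Fintype.card V using Nat.strong_induction_on generalizing V with
  | _ n ih =>
  obtain rfl | hne := eq_or_ne G ⊥
  · rw [domPoly_bot_eval]
    exact isUnit_neg_one.pow _
  obtain ⟨x, y, hxy⟩ := ne_bot_iff_exists_adj.1 hne
  obtain ⟨a, b, ha⟩ := hG.exists_neighborSet_eq_singleton hxy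
  rw [domPoly_eval_neg_one_of_neighborSet_eq_singleton ha]
  exact (ih _ (h ▸ Fintype.card_subtype_lt (x := a) (by simp)) (hG.induce _) rfl).neg

end SimpleGraph

theorem domPoly_forest_neg_one :
    (∀ (V : Type) (_ : Fintype V) (_ : DecidableEq V) (F : SimpleGraph V), F.IsAcyclic →
      (domPoly F).eval (-1) = 1 ∨ (domPoly F).eval (-1) = -1) ∧
    (∀ n : ℕ, 1 ≤ n →
      (domPoly (pathGraph n)).eval (-1) = 1 ∨ (domPoly (pathGraph n)).eval (-1) = -1) :=
  ⟨fun _ _ _ _ hF ↦ Int.isUnit_iff.1 hF.isUnit_domPoly_eval_neg_one,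
    fun n _ ↦ Int.isUnit_iff.1 (pathGraph_isAcyclic n).isUnit_domPoly_eval_neg_one⟩
end

section
/- For every n ≥ 1, the second derivative of the path domination polynomial at -1 satisfies: D''(P_n,-1) = -n(n+4)/8 if n ≡ 0 (mod 4), -(n-1)^2/8 if n ≡ 1 (mod 4), (n+2)^2/8 if n ≡ 2 (mod 4), and (n-3)(n+1)/8 if n ≡ 3 (mod 4). -/
open SimpleGraph Polynomial Finset

namespace PathDom

def DomAt (S : Finset ℕ) (v : ℕ) : Prop := v ∈ S ∨ v + 1 ∈ S ∨ (1 ≤ v ∧ v - 1 ∈ S)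

def Pref (n : ℕ) (S : Finset ℕ) : Prop := ∀ v, v + 1 < n → DomAt S v

open Classical in
noncomputable def pa (n : ℕ) : Polynomial ℤ :=
  ∑ S ∈ (range n).powerset.filter (fun S => Pref n S ∧ n - 1 ∈ S), X ^ S.card

open Classical in
noncomputable def pb (n : ℕ) : Polynomial ℤ :=
  ∑ S ∈ (range n).powerset.filter (fun S => Pref n S ∧ n - 1 ∉ S ∧ n - 2 ∈ S), X ^ S.card

open Classical in
noncomputable def pc (n : ℕ) : Polynomial ℤ :=
  ∑ S ∈ (range n).powerset.filter (fun S => Pref n S ∧ n - 1 ∉ S ∧ n - 2 ∉ S), X ^ S.card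

lemma pb_succ (n : ℕ) : pb (n + 1) = pa n := by
  classical
  rw [pb, pa]
  apply Finset.sum_congr _ (fun _ _ => rfl)
  ext S
  simp only [Finset.mem_filter, Finset.mem_powerset, Nat.add_sub_cancel]
  constructor
  · rintro ⟨hsub, hpref, hn, hn1⟩
    have hsub' : S ⊆ range n := by
      intro x hx
      have := hsub hx
      simp only [Finset.mem_range] at this ⊢
      rcases Nat.lt_succ_iff_lt_or_eq.1 this with h | h
      · exact h
      · exact absurd (h ▸ hx) hn
    refine ⟨hsub', fun v hv => hpref v (by omega), ?_⟩
    rcases Nat.eq_zero_or_pos n with h0 | h0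
    · subst h0; simpa using hn1
    · simpa using hn1
  · rintro ⟨hsub, hpref, hlast⟩
    have hn : n ∉ S := fun h => by simpa using hsub h
    refine ⟨hsub.trans (by intro x; simp only [mem_range]; omega), ?_, hn, ?_⟩
    · intro v hv
      rcases Nat.lt_or_ge (v+1) n with h | h
      · exact hpref v h
      · -- v = n - 1
        have hv' : v = n - 1 := by omega
        subst hv'
        exact Or.inl hlast
    · rcases Nat.eq_zero_or_pos n with h0 | h0
      · subst h0; simpa using hlast
      · simpa using hlast

lemma subset_range_of (n : ℕ) (S : Finset ℕ) (h : S ⊆ range (n+1)) (hn : n ∉ S) :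
    S ⊆ range n := by
  intro x hx
  have := h hx
  simp only [Finset.mem_range] at this ⊢
  rcases Nat.lt_succ_iff_lt_or_eq.1 this with h' | h'
  · exact h'
  · exact absurd (h' ▸ hx) hn

lemma pc_succ (n : ℕ) (hn : 1 ≤ n) : pc (n + 1) = pb n := by
  classical
  rw [pb, pc]
  apply Finset.sum_congr _ (fun _ _ => rfl)
  ext S
  simp only [Finset.mem_filter, Finset.mem_powerset, Nat.add_sub_cancel]
  constructor
  · rintro ⟨hsub, hpref, hn1, hn2⟩
    have hn2' : n - 1 ∉ S := by
      rcases Nat.eq_or_lt_of_le hn with h | h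
      · rw [← h] at hn2 ⊢; simpa using hn2
      · simpa using hn2
    have hsub' := subset_range_of n S hsub hn1
    have hdom : DomAt S (n-1) := hpref (n-1) (by omega)
    rcases hdom with h | h | h
    · exact absurd h hn2'
    · rw [show n - 1 + 1 = n by omega] at h; exact absurd h hn1
    · exact ⟨hsub', fun v hv => hpref v (by omega), hn2', by
        rw [show n - 1 - 1 = n - 2 by omega] at h; exact h.2⟩
  · rintro ⟨hsub, hpref, hn1, hn2⟩
    have hnS : n ∉ S := fun h => by simpa using hsub h
    have h2 : 2 ≤ n := by
      by_contra h
      have hn1' : n = 1 := by omega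
      subst hn1'
      simp at hn1 hn2
      exact hn1 hn2
    refine ⟨hsub.trans (by intro x; simp only [mem_range]; omega), ?_, hnS, by
      rwa [show n + 1 - 2 = n - 1 by omega]⟩
    intro v hv
    rcases Nat.lt_or_ge (v+1) n with h | h
    · exact hpref v h
    · have hv' : v = n - 1 := by omega
      subst hv'
      exact Or.inr (Or.inr ⟨by omega, by rwa [show n - 1 - 1 = n - 2 by omega]⟩)

open Classical in
lemma sum_split (n : ℕ) :
    ∑ S ∈ (range n).powerset.filter (fun S => Pref n S), (X : Polynomial ℤ) ^ S.card
      = pa n + pb n + pc n := by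
  classical
  rw [pa, pb, pc]
  have e1 : (range n).powerset.filter (fun S => Pref n S ∧ n - 1 ∈ S)
      = ((range n).powerset.filter (fun S => Pref n S)).filter (fun S => n - 1 ∈ S) := by
    rw [Finset.filter_filter]
  have e2 : (range n).powerset.filter (fun S => Pref n S ∧ n - 1 ∉ S ∧ n - 2 ∈ S)
      = (((range n).powerset.filter (fun S => Pref n S)).filter
          (fun S => ¬ (n - 1 ∈ S))).filter (fun S => n - 2 ∈ S) := by
    rw [Finset.filter_filter, Finset.filter_filter]
  have e3 : (range n).powerset.filter (fun S => Pref n S ∧ n - 1 ∉ S ∧ n - 2 ∉ S)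
      = (((range n).powerset.filter (fun S => Pref n S)).filter
          (fun S => ¬ (n - 1 ∈ S))).filter (fun S => ¬ (n - 2 ∈ S)) := by
    rw [Finset.filter_filter, Finset.filter_filter]
  rw [e1, e2, e3, add_assoc, Finset.sum_filter_add_sum_filter_not,
    Finset.sum_filter_add_sum_filter_not]

lemma domAt_erase {S : Finset ℕ} {v n : ℕ} (h : v + 1 < n) :
    DomAt (S.erase n) v ↔ DomAt S v := by
  unfold DomAt
  simp only [Finset.mem_erase]
  constructor
  · rintro (⟨_, h'⟩ | ⟨_, h'⟩ | ⟨h1, _, h2⟩) <;> tauto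
  · rintro (h' | h' | ⟨h1, h2⟩)
    · exact Or.inl ⟨by omega, h'⟩
    · exact Or.inr (Or.inl ⟨by omega, h'⟩)
    · exact Or.inr (Or.inr ⟨h1, by omega, h2⟩)

lemma domAt_mono {S T : Finset ℕ} {v : ℕ} (h : S ⊆ T) (hd : DomAt S v) : DomAt T v := by
  unfold DomAt at *
  rcases hd with h' | h' | ⟨h1, h2⟩
  · exact Or.inl (h h')
  · exact Or.inr (Or.inl (h h'))
  · exact Or.inr (Or.inr ⟨h1, h h2⟩)

open Classical in
lemma pa_succ (n : ℕ) : pa (n + 1) = X * (pa n + pb n + pc n) := by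
  classical
  rw [← sum_split, pa, Finset.mul_sum]
  refine Finset.sum_bij' (fun S (_ : S ∈ _) => S.erase n)
    (fun T (_ : T ∈ _) => insert n T) ?hi ?hj ?li ?ri ?hval
  case hi =>
    intro S hS
    simp only [Finset.mem_filter, Finset.mem_powerset, Nat.add_sub_cancel] at hS
    obtain ⟨hsub, hpref, hmem⟩ := hS
    simp only [Finset.mem_filter, Finset.mem_powerset]
    constructor
    · intro x hx
      simp only [Finset.mem_erase] at hx
      have := hsub hx.2
      simp only [Finset.mem_range] at this ⊢
      omega
    · intro v hv
      exact (domAt_erase (by omega)).2 (hpref v (by omega))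
  case hj =>
    intro T hT
    simp only [Finset.mem_filter, Finset.mem_powerset] at hT
    obtain ⟨hsub, hpref⟩ := hT
    simp only [Finset.mem_filter, Finset.mem_powerset, Nat.add_sub_cancel]
    refine ⟨?_, ?_, Finset.mem_insert_self n T⟩
    · intro x hx
      rcases Finset.mem_insert.1 hx with h | h
      · simp [h]
      · have := hsub h
        simp only [Finset.mem_range] at this ⊢
        omega
    · intro v hv
      rcases Nat.lt_or_ge (v + 1) n with h | h
      · exact domAt_mono (Finset.subset_insert n T) (hpref v h)
      · have : v + 1 = n := by omega
        exact Or.inr (Or.inl (this ▸ Finset.mem_insert_self n T))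
  case li =>
    intro S hS
    simp only [Finset.mem_filter, Finset.mem_powerset, Nat.add_sub_cancel] at hS
    exact Finset.insert_erase hS.2.2
  case ri =>
    intro T hT
    simp only [Finset.mem_filter, Finset.mem_powerset] at hT
    apply Finset.erase_insert
    intro h
    have := hT.1 h
    simp at this
  case hval =>
    intro S hS
    simp only [Finset.mem_filter, Finset.mem_powerset, Nat.add_sub_cancel] at hS
    rw [Finset.card_erase_of_mem hS.2.2, ← pow_succ']
    congr 1
    have : 1 ≤ S.card := Finset.card_pos.2 ⟨n, hS.2.2⟩
    omega

open Classical in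
lemma domPoly_eq_sum {V : Type*} [Fintype V] [DecidableEq V] (G : SimpleGraph V) :
    domPoly G = ∑ S ∈ univ.filter
      (fun S : Finset V => ∀ v, v ∈ S ∨ ∃ u ∈ S, G.Adj u v), (X : Polynomial ℤ) ^ S.card := by
  classical
  rw [domPoly]
  rw [← Finset.sum_fiberwise_of_maps_to (g := fun S : Finset V => S.card)
      (t := range (Fintype.card V + 1))
      (fun S _ => by simp only [Finset.mem_range, Nat.lt_succ_iff]; exact Finset.card_le_univ S)
      (fun S => (X : Polynomial ℤ) ^ S.card)]
  apply Finset.sum_congr rfl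
  intro i _
  rw [Finset.sum_congr rfl (fun S hS => by rw [(Finset.mem_filter.1 hS).2]),
    Finset.sum_const]
  have : (univ.filter (fun S : Finset V => ∀ v, v ∈ S ∨ ∃ u ∈ S, G.Adj u v)).filter
      (fun S => S.card = i)
      = univ.filter (fun S : Finset V => S.card = i ∧ ∀ v, v ∈ S ∨ ∃ u ∈ S, G.Adj u v) := by
    rw [Finset.filter_filter]
    exact Finset.filter_congr (fun S _ => by tauto)
  rw [domCount, ← this, nsmul_eq_mul]
  simp

lemma attachFin_map {n : ℕ} (T : Finset ℕ) (h : ∀ m ∈ T, m < n) :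
    (T.attachFin h).map Fin.valEmbedding = T := by
  ext x
  simp only [Finset.mem_map, Fin.valEmbedding_apply, Finset.mem_attachFin]
  constructor
  · rintro ⟨a, ha, rfl⟩; exact ha
  · intro hx; exact ⟨⟨x, h x hx⟩, hx, rfl⟩

lemma dom_iff (n : ℕ) (S : Finset (Fin n)) :
    (∀ v, v ∈ S ∨ ∃ u ∈ S, (pathGraph n).Adj u v)
      ↔ ∀ w, w < n → DomAt (S.map Fin.valEmbedding) w := by
  constructor
  · intro h w hw
    rcases h ⟨w, hw⟩ with hv | ⟨u, hu, hadj⟩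
    · exact Or.inl (by simp only [Finset.mem_map, Fin.valEmbedding_apply]; exact ⟨_, hv, rfl⟩)
    · rw [pathGraph_adj] at hadj
      have hcoe : ((⟨w, hw⟩ : Fin n) : ℕ) = w := rfl
      rw [hcoe] at hadj
      rcases hadj with h1 | h1
      · refine Or.inr (Or.inr ⟨by omega, ?_⟩)
        simp only [Finset.mem_map, Fin.valEmbedding_apply]
        exact ⟨u, hu, by omega⟩
      · refine Or.inr (Or.inl ?_)
        simp only [Finset.mem_map, Fin.valEmbedding_apply]
        exact ⟨u, hu, by omega⟩
  · intro h v
    rcases h v.val v.isLt with hv | hv | ⟨h1, hv⟩ <;>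
      simp only [Finset.mem_map, Fin.valEmbedding_apply] at hv
    · obtain ⟨a, ha, hav⟩ := hv
      exact Or.inl (by rwa [show a = v from Fin.ext hav] at ha)
    · obtain ⟨a, ha, hav⟩ := hv
      exact Or.inr ⟨a, ha, pathGraph_adj.2 (Or.inr (by omega))⟩
    · obtain ⟨a, ha, hav⟩ := hv
      exact Or.inr ⟨a, ha, pathGraph_adj.2 (Or.inl (by omega))⟩

open Classical in
lemma sum_fin_eq_nat (n : ℕ) :
    ∑ S ∈ univ.filter
      (fun S : Finset (Fin n) => ∀ v, v ∈ S ∨ ∃ u ∈ S, (pathGraph n).Adj u v),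
        (X : Polynomial ℤ) ^ S.card
      = ∑ T ∈ (range n).powerset.filter (fun T => ∀ w, w < n → DomAt T w),
          (X : Polynomial ℤ) ^ T.card := by
  classical
  refine Finset.sum_bij' (fun S (_ : S ∈ _) => S.map Fin.valEmbedding)
    (fun T hT => T.attachFin (fun m hm => mem_range.1
      ((mem_powerset.1 (mem_filter.1 hT).1) hm))) ?hi ?hj ?li ?ri ?hval
  case hi =>
    intro S hS
    simp only [Finset.mem_filter, Finset.mem_univ, true_and] at hS
    simp only [Finset.mem_filter, Finset.mem_powerset]
    refine ⟨?_, (dom_iff n S).1 hS⟩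
    intro x hx
    simp only [Finset.mem_map, Fin.valEmbedding_apply] at hx
    obtain ⟨a, _, rfl⟩ := hx
    simpa using a.isLt
  case hj =>
    intro T hT
    simp only [Finset.mem_filter, Finset.mem_powerset] at hT
    simp only [Finset.mem_filter, Finset.mem_univ, true_and]
    rw [dom_iff, attachFin_map]
    exact hT.2
  case li =>
    intro S _
    ext a
    simp [Finset.mem_attachFin]
    constructor
    · rintro ⟨b, hb, hba⟩; rwa [show b = a from Fin.ext hba] at hb
    · intro h; exact ⟨a, h, rfl⟩
  case ri =>
    intro T hT
    exact attachFin_map T _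
  case hval =>
    intro S _
    rw [Finset.card_map]

open Classical in
lemma sum_nat_split (n : ℕ) (hn : 1 ≤ n) :
    ∑ T ∈ (range n).powerset.filter (fun T => ∀ w, w < n → DomAt T w),
        (X : Polynomial ℤ) ^ T.card = pa n + pb n := by
  classical
  rw [pa, pb,
    ← Finset.sum_filter_add_sum_filter_not
      ((range n).powerset.filter (fun T => ∀ w, w < n → DomAt T w)) (fun T => n - 1 ∈ T)]
  congr 1
  · apply Finset.sum_congr _ (fun _ _ => rfl)
    rw [Finset.filter_filter]
    ext T
    simp only [Finset.mem_filter, Finset.mem_powerset]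
    constructor
    · rintro ⟨hsub, hQ, hmem⟩
      exact ⟨hsub, fun v hv => hQ v (by omega), hmem⟩
    · rintro ⟨hsub, hpref, hmem⟩
      refine ⟨hsub, ?_, hmem⟩
      intro w hw
      rcases Nat.lt_or_ge (w + 1) n with h | h
      · exact hpref w h
      · exact Or.inl (by rwa [show w = n - 1 by omega])
  · apply Finset.sum_congr _ (fun _ _ => rfl)
    rw [Finset.filter_filter]
    ext T
    simp only [Finset.mem_filter, Finset.mem_powerset]
    constructor
    · rintro ⟨hsub, hQ, hnot⟩
      have hdom := hQ (n - 1) (by omega)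
      have hnn : n ∉ T := fun h => by simpa using hsub h
      rcases hdom with h | h | ⟨h1, h2⟩
      · exact absurd h hnot
      · rw [show n - 1 + 1 = n by omega] at h; exact absurd h hnn
      · exact ⟨hsub, fun v hv => hQ v (by omega), hnot,
          by rwa [show n - 1 - 1 = n - 2 by omega] at h2⟩
    · rintro ⟨hsub, hpref, hn1, hn2⟩
      have h2 : 2 ≤ n := by
        by_contra h
        have : n = 1 := by omega
        subst this
        simp at hn1 hn2
        exact hn1 hn2
      refine ⟨hsub, ?_, hn1⟩
      intro w hw
      rcases Nat.lt_or_ge (w + 1) n with h | h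
      · exact hpref w h
      · have : w = n - 1 := by omega
        subst this
        exact Or.inr (Or.inr ⟨by omega, by rwa [show n - 1 - 1 = n - 2 by omega]⟩)

noncomputable def A : ℕ → Polynomial ℤ
  | 0 => 0
  | 1 => X
  | 2 => X ^ 2 + X
  | (n + 3) => X * (A (n + 2) + A (n + 1) + A n)

lemma pa_zero : pa 0 = 0 := by
  classical
  rw [pa]
  have h : (range 0).powerset.filter (fun S => Pref 0 S ∧ 0 - 1 ∈ S) = ∅ := by
    ext S
    simp only [Finset.mem_filter, Finset.mem_powerset, Finset.notMem_empty, iff_false, not_and]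
    intro hsub _ hmem
    have := hsub hmem
    simp at this
  rw [h, Finset.sum_empty]

lemma pa_one : pa 1 = X := by
  classical
  rw [pa]
  have h : (range 1).powerset.filter
      (fun S => Pref 1 S ∧ 1 - 1 ∈ S) = {{0}} := by
    ext S
    simp only [Finset.mem_filter, Finset.mem_powerset, Finset.mem_singleton]
    constructor
    · rintro ⟨hsub, _, hmem⟩
      apply Finset.Subset.antisymm
      · simpa using hsub
      · simpa using hmem
    · rintro rfl
      refine ⟨by simp, fun v hv => absurd hv (by omega), by simp⟩
  rw [h, Finset.sum_singleton]
  simp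

lemma pa_two : pa 2 = X ^ 2 + X := by
  classical
  rw [pa]
  have h : (range 2).powerset.filter
      (fun S => Pref 2 S ∧ 2 - 1 ∈ S) = {{0, 1}, {1}} := by
    ext S
    simp only [Finset.mem_filter, Finset.mem_powerset, Finset.mem_insert, Finset.mem_singleton]
    constructor
    · rintro ⟨hsub, _, hmem⟩
      by_cases h0 : 0 ∈ S
      · left
        apply Finset.Subset.antisymm
        · intro x hx
          have := hsub hx
          simp only [Finset.mem_range] at this
          simp only [Finset.mem_insert, Finset.mem_singleton]
          omega
        · intro x hx
          simp only [Finset.mem_insert, Finset.mem_singleton] at hx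
          rcases hx with rfl | rfl
          · exact h0
          · exact hmem
      · right
        apply Finset.Subset.antisymm
        · intro x hx
          have := hsub hx
          simp only [Finset.mem_range] at this
          simp only [Finset.mem_singleton]
          have : x = 0 ∨ x = 1 := by omega
          rcases this with rfl | rfl
          · exact absurd hx h0
          · rfl
        · intro x hx
          simp only [Finset.mem_singleton] at hx
          subst hx
          exact hmem
    · rintro (rfl | rfl)
      · exact ⟨by intro x; simp only [Finset.mem_insert, Finset.mem_singleton, mem_range]; omega,
          fun v hv => by
            have : v = 0 := by omega
            subst this
            exact Or.inl (by simp), by simp⟩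
      · exact ⟨by intro x; simp only [Finset.mem_singleton, mem_range]; omega,
          fun v hv => by
            have : v = 0 := by omega
            subst this
            exact Or.inr (Or.inl (by simp)), by simp⟩
  rw [h]
  rw [Finset.sum_insert (by simp), Finset.sum_singleton]
  have c1 : ({0, 1} : Finset ℕ).card = 2 := rfl
  have c2 : ({1} : Finset ℕ).card = 1 := rfl
  rw [c1, c2, pow_one]

lemma pa_eq_A : ∀ n, pa n = A n := by
  intro n
  induction n using Nat.strong_induction_on with
  | _ n ih =>
    match n with
    | 0 => rw [pa_zero]; rfl
    | 1 => rw [pa_one]; rfl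
    | 2 => rw [pa_two]; rfl
    | (m + 3) =>

      rw [show m + 3 = (m + 2) + 1 from rfl, pa_succ,
        show m + 2 = (m + 1) + 1 from rfl, pb_succ, pc_succ (m + 1) (by omega), pb_succ,
        ih (m + 2) (by omega), ih (m + 1) (by omega), ih m (by omega)]
      rfl

def uA (n : ℕ) : ℤ :=
  if n % 4 = 0 then 0 else if n % 4 = 1 then -1 else if n % 4 = 2 then 0 else 1

def vA (n : ℕ) : ℤ :=
  if n % 4 = 0 then (n / 4 : ℕ)
  else if n % 4 = 1 then (n / 4 : ℕ) + 1
  else -((n / 4 : ℕ) + 1)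

def wA (n : ℕ) : ℤ :=
  if n % 4 = 0 then -2 * ((n / 4 : ℕ) : ℤ) ^ 2
  else if n % 4 = 1 then 0
  else if n % 4 = 2 then 2 * (((n / 4 : ℕ) : ℤ) + 1) ^ 2
  else -2 * (((n / 4 : ℕ) : ℤ) + 1)

lemma A_evals (n : ℕ) :
    (A n).eval (-1) = uA n ∧ (derivative (A n)).eval (-1) = vA n ∧
      (derivative (derivative (A n))).eval (-1) = wA n := by
  induction n using Nat.strong_induction_on with
  | _ n ih =>
    match n with
    | 0 => refine ⟨?_, ?_, ?_⟩ <;> simp [A, uA, vA, wA]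
    | 1 => refine ⟨?_, ?_, ?_⟩ <;> simp [A, uA, vA, wA]
    | 2 => refine ⟨?_, ?_, ?_⟩ <;> simp [A, uA, vA, wA] <;> norm_num
    | (m + 3) =>
      obtain ⟨h0, h1, h2⟩ := ih m (by omega)
      obtain ⟨h0', h1', h2'⟩ := ih (m + 1) (by omega)
      obtain ⟨h0'', h1'', h2''⟩ := ih (m + 2) (by omega)
      have hA : A (m + 3) = X * (A (m + 2) + A (m + 1) + A m) := rfl
      have e0 : (A (m + 3)).eval (-1) = -(uA (m + 2) + uA (m + 1) + uA m) := by
        rw [hA]; simp only [eval_mul, eval_add, eval_X, h0, h0', h0'']; ring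
      have e1 : (derivative (A (m + 3))).eval (-1)
          = (uA (m + 2) + uA (m + 1) + uA m) - (vA (m + 2) + vA (m + 1) + vA m) := by
        rw [hA]
        simp only [derivative_mul, derivative_X, one_mul, derivative_add, eval_add, eval_mul,
          eval_X, h0, h0', h0'', h1, h1', h1'']
        ring
      have e2 : (derivative (derivative (A (m + 3)))).eval (-1)
          = 2 * (vA (m + 2) + vA (m + 1) + vA m) - (wA (m + 2) + wA (m + 1) + wA m) := by
        rw [hA]
        simp only [derivative_mul, derivative_X, one_mul, derivative_add, eval_add, eval_mul,
          eval_X, h1, h1', h1'', h2, h2', h2'']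
        ring
      rw [e0, e1, e2]
      have h4 : m % 4 = 0 ∨ m % 4 = 1 ∨ m % 4 = 2 ∨ m % 4 = 3 := by omega
      obtain ⟨q, hq⟩ : ∃ q, m = 4 * q + m % 4 := ⟨m / 4, by omega⟩
      rcases h4 with hr | hr | hr | hr <;> rw [hr] at hq
      · subst hq
        refine ⟨?_, ?_, ?_⟩ <;>
        simp only [uA, vA, wA,
          show (4*q+0)%4 = 0 by omega, show (4*q+0+1)%4 = 1 by omega,
          show (4*q+0+2)%4 = 2 by omega, show (4*q+0+3)%4 = 3 by omega,
          show (4*q+0)/4 = q by omega, show (4*q+0+1)/4 = q by omega,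
          show (4*q+0+2)/4 = q by omega, show (4*q+0+3)/4 = q by omega] <;>
        norm_num <;> push_cast <;> ring
      · subst hq
        refine ⟨?_, ?_, ?_⟩ <;>
        simp only [uA, vA, wA,
          show (4*q+1)%4 = 1 by omega, show (4*q+1+1)%4 = 2 by omega,
          show (4*q+1+2)%4 = 3 by omega, show (4*q+1+3)%4 = 0 by omega,
          show (4*q+1)/4 = q by omega, show (4*q+1+1)/4 = q by omega,
          show (4*q+1+2)/4 = q by omega, show (4*q+1+3)/4 = q+1 by omega] <;>
        norm_num <;> push_cast <;> ring
      · subst hq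
        refine ⟨?_, ?_, ?_⟩ <;>
        simp only [uA, vA, wA,
          show (4*q+2)%4 = 2 by omega, show (4*q+2+1)%4 = 3 by omega,
          show (4*q+2+2)%4 = 0 by omega, show (4*q+2+3)%4 = 1 by omega,
          show (4*q+2)/4 = q by omega, show (4*q+2+1)/4 = q by omega,
          show (4*q+2+2)/4 = q+1 by omega, show (4*q+2+3)/4 = q+1 by omega] <;>
        norm_num <;> push_cast <;> ring
      · subst hq
        refine ⟨?_, ?_, ?_⟩ <;>
        simp only [uA, vA, wA,
          show (4*q+3)%4 = 3 by omega, show (4*q+3+1)%4 = 0 by omega,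
          show (4*q+3+2)%4 = 1 by omega, show (4*q+3+3)%4 = 2 by omega,
          show (4*q+3)/4 = q by omega, show (4*q+3+1)/4 = q+1 by omega,
          show (4*q+3+2)/4 = q+1 by omega, show (4*q+3+3)/4 = q+1 by omega] <;>
        norm_num <;> push_cast <;> ring

lemma domPoly_path (n : ℕ) (hn : 1 ≤ n) :
    domPoly (pathGraph n) = A n + A (n - 1) := by
  have h1 : domPoly (pathGraph n) = pa n + pb n := by
    rw [domPoly_eq_sum]
    convert (sum_fin_eq_nat n).trans (sum_nat_split n hn) using 2
    classical
    rw [Finset.filter_congr_decidable, Finset.filter_congr_decidable]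
  have h2 : pb n = pa (n - 1) := by
    rw [show n = (n - 1) + 1 by omega, pb_succ]
    simp
  rw [h1, h2, pa_eq_A, pa_eq_A]

lemma deriv2_eval (n : ℕ) (hn : 1 ≤ n) :
    (derivative (derivative (domPoly (pathGraph n)))).eval (-1) = wA n + wA (n - 1) := by
  rw [domPoly_path n hn]
  simp only [derivative_add, eval_add, (A_evals n).2.2, (A_evals (n - 1)).2.2]

end PathDom

open PathDom in
theorem domPoly_path_deriv2_neg_one (n : ℕ) (hn : 1 ≤ n) :
    (n % 4 = 0 →
        8 * (derivative (derivative (domPoly (pathGraph n)))).eval (-1)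
          = -((n : ℤ) * ((n : ℤ) + 4))) ∧
    (n % 4 = 1 →
        8 * (derivative (derivative (domPoly (pathGraph n)))).eval (-1)
          = -(((n : ℤ) - 1) ^ 2)) ∧
    (n % 4 = 2 →
        8 * (derivative (derivative (domPoly (pathGraph n)))).eval (-1)
          = ((n : ℤ) + 2) ^ 2) ∧
    (n % 4 = 3 →
        8 * (derivative (derivative (domPoly (pathGraph n)))).eval (-1)
          = ((n : ℤ) - 3) * ((n : ℤ) + 1)) := by
  rw [deriv2_eval n hn]
  refine ⟨fun h => ?_, fun h => ?_, fun h => ?_, fun h => ?_⟩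
  · obtain ⟨q, rfl⟩ : ∃ q, n = 4 * q + 4 := ⟨n / 4 - 1, by omega⟩
    simp only [wA, show (4*q+4) % 4 = 0 by omega, show (4*q+4-1) % 4 = 3 by omega,
      show (4*q+4) / 4 = q + 1 by omega, show (4*q+4-1) / 4 = q by omega]
    norm_num
    push_cast
    ring
  · obtain ⟨q, rfl⟩ : ∃ q, n = 4 * q + 1 := ⟨n / 4, by omega⟩
    simp only [wA, show (4*q+1) % 4 = 1 by omega, show (4*q+1-1) % 4 = 0 by omega,
      show (4*q+1) / 4 = q by omega, show (4*q+1-1) / 4 = q by omega]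
    norm_num
    push_cast
    ring
  · obtain ⟨q, rfl⟩ : ∃ q, n = 4 * q + 2 := ⟨n / 4, by omega⟩
    simp only [wA, show (4*q+2) % 4 = 2 by omega, show (4*q+2-1) % 4 = 1 by omega,
      show (4*q+2) / 4 = q by omega, show (4*q+2-1) / 4 = q by omega]
    norm_num
    push_cast
    ring
  · obtain ⟨q, rfl⟩ : ∃ q, n = 4 * q + 3 := ⟨n / 4, by omega⟩
    simp only [wA, show (4*q+3) % 4 = 3 by omega, show (4*q+3-1) % 4 = 2 by omega,
      show (4*q+3) / 4 = q by omega, show (4*q+3-1) / 4 = q by omega]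
    norm_num
    push_cast
    ring
end

section
/- For every n ≥ 3, the derivative of the cycle domination polynomial at -1 satisfies: D'(C_n,-1) = -n if n ≡ 0 (mod 4), n if n ≡ 1 (mod 4), and 0 if n ≡ 2 or 3 (mod 4). -/
/-
Differentiating term by term, `D'(G, -1) = ∑ |S| (-1)^(|S|-1) = -∑_v ∑_{S ∋ v} (-1)^|S|`,
the sums running over dominating sets `S`. On `C_n` the rotations make the inner sum independent
of `v`, so only dominating sets through `0` matter. Cutting the cycle open at `0`, such a set is
the Boolean string of memberships of `1, …, n-1` with no three consecutive `false`s, and its sign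
is `-(-1)^#true`. Splitting off leading letters gives `g (k+3) = -g (k+2) - g (k+1) - g k` for
the signed count `g k = stringSum [] k` of such strings of length `k`; hence `g` is `4`-periodic
with values `1, 0, 0, -1`, and `D'(C_n, -1) = n * g (n-1)`.
-/

open SimpleGraph Polynomial Finset

namespace SimpleGraph

variable {V W : Type*}

def IsDominatingSet (G : SimpleGraph V) (S : Finset V) : Prop :=
  ∀ v, v ∈ S ∨ ∃ u ∈ S, G.Adj u v

open Classical in
theorem domCount_eq_card [Fintype V] [DecidableEq V] (G : SimpleGraph V) (i : ℕ) :
    domCount G i = #{S | G.IsDominatingSet S ∧ #S = i} := by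
  simp only [domCount, IsDominatingSet, and_comm]

open Classical in
theorem domPoly_eq_sum [Fintype V] [DecidableEq V] (G : SimpleGraph V) :
    domPoly G = ∑ S with G.IsDominatingSet S, X ^ #S := by
  rw [← sum_fiberwise_of_maps_to (g := card) (t := range (Fintype.card V + 1))
    fun S _ ↦ mem_range_succ_iff.2 (card_le_univ S)]
  refine sum_congr rfl fun i _ ↦ ?_
  rw [sum_congr rfl fun S hS ↦ by rw [(mem_filter.1 hS).2], sum_const, filter_filter,
    nsmul_eq_mul, ← map_natCast C, domCount_eq_card]

open Classical in
noncomputable def signedDomSum [Fintype V] (G : SimpleGraph V) (v : V) : ℤ :=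
  ∑ S with G.IsDominatingSet S ∧ v ∈ S, (-1) ^ #S

open Classical in
theorem eval_neg_one_derivative_domPoly [Fintype V] [DecidableEq V] (G : SimpleGraph V) :
    (derivative (domPoly G)).eval (-1) = -∑ v, G.signedDomSum v := by
  have hterm (k : ℕ) : (derivative (X ^ k : ℤ[X])).eval (-1) = -(k * (-1) ^ k) := by
    rw [derivative_X_pow]
    cases k <;> simp [pow_succ]
  rw [domPoly_eq_sum, derivative_sum, eval_finsetSum]
  simp only [hterm, sum_neg_distrib, neg_inj, signedDomSum, ← filter_filter]
  simp only [← nsmul_eq_mul, ← sum_const]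
  exact sum_comm' fun S v ↦ by simp [and_comm]

theorem isDominatingSet_image_iff [DecidableEq W] {G : SimpleGraph V} {G' : SimpleGraph W}
    (φ : G ≃g G') (S : Finset V) : G'.IsDominatingSet (S.image φ) ↔ G.IsDominatingSet S :=
  (φ.toEquiv.forall_congr fun v ↦ by simp [φ.map_adj_iff]).symm

theorem signedDomSum_iso [Fintype V] [Fintype W] {G : SimpleGraph V} {G' : SimpleGraph W}
    (φ : G ≃g G') (v : V) : G'.signedDomSum (φ v) = G.signedDomSum v := by
  classical
  refine (sum_nbij' (image φ) (image φ.symm) ?_ ?_ ?_ ?_ ?_).symm <;>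
    simp [isDominatingSet_image_iff, image_image, card_image_of_injective _ φ.injective,
      RelIso.symm_apply_eq]

theorem sum_signedDomSum_of_forall_iso [Fintype V] (G : SimpleGraph V) (v₀ : V)
    (h : ∀ v, ∃ φ : G ≃g G, φ v₀ = v) :
    ∑ v, G.signedDomSum v = Fintype.card V * G.signedDomSum v₀ := by
  rw [← nsmul_eq_mul, ← card_univ, ← sum_const]
  refine sum_congr rfl fun v _ ↦ ?_
  obtain ⟨φ, rfl⟩ := h v
  exact signedDomSum_iso φ v₀

theorem cycleGraph_exists_iso_apply_zero (n : ℕ) (v : Fin (n + 2)) :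
    ∃ φ : cycleGraph (n + 2) ≃g cycleGraph (n + 2), φ 0 = v :=
  ⟨⟨Equiv.addLeft v, by simp [cycleGraph_adj]⟩, add_zero v⟩

theorem isDominatingSet_cycleGraph_iff {n : ℕ} (S : Finset (Fin (n + 2))) :
    (cycleGraph (n + 2)).IsDominatingSet S ↔ ∀ v, v - 1 ∈ S ∨ v ∈ S ∨ v + 1 ∈ S := by
  refine forall_congr' fun v ↦ ?_
  simp_rw [(cycleGraph _).adj_comm _ v, ← mem_neighborSet, cycleGraph_neighborSet]
  simp only [Set.mem_insert_iff, Set.mem_singleton_iff, and_or_left, exists_or, exists_eq_right]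
  tauto

end SimpleGraph

theorem Fintype.sum_ofFn_fin_succ {α M : Type*} [Fintype α] [AddCommMonoid M] {k : ℕ}
    (F : List α → M) :
    ∑ f : Fin (k + 1) → α, F (List.ofFn f) = ∑ a, ∑ f : Fin k → α, F (a :: List.ofFn f) := by
  rw [← (Fin.consEquiv fun _ ↦ α).sum_comp, Fintype.sum_prod_type]
  simp [Fin.consEquiv, List.ofFn_succ]

theorem Fin.card_filter_eq_count_ofFn {α : Type*} [DecidableEq α] {n : ℕ} (c : Fin n → α)
    (a : α) : #{i | c i = a} = (List.ofFn c).count a := by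
  simpa using card_filter_univ_eq_vector_get_eq_count a (List.Vector.ofFn c)

theorem Fin.sum_zero_mem_eq_sum_cons_true {M : Type*} [AddCommMonoid M] {n : ℕ}
    (F : Finset (Fin (n + 1)) → M) :
    ∑ S with 0 ∈ S, F S =
      ∑ f : Fin n → Bool, F {v | (Fin.cons true f : Fin (n + 1) → Bool) v} := by
  refine sum_nbij' (fun S i ↦ i.succ ∈ S)
    (fun f ↦ ({v | (Fin.cons true f : Fin (n + 1) → Bool) v} : Finset _)) ?_ ?_ ?_ ?_ ?_
  · simp
  · simp
  · intro S hS
    ext v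
    cases v using Fin.cases <;> simp_all
  · intro f _
    ext i
    simp
  · intro S hS
    congr
    ext v
    cases v using Fin.cases <;> simp_all

open Fin.NatCast in
-- The windows `v - 1, v, v + 1` are cyclic; since `c 0 = true`, no all-`false` one wraps around.
theorem List.triple_false_infix_ofFn_iff {n : ℕ} (c : Fin (n + 1) → Bool) (hc : c 0 = true) :
    [false, false, false] <:+: List.ofFn c ↔
      ∃ v, c (v - 1) = false ∧ c v = false ∧ c (v + 1) = false := by
  have hget (j : ℕ) (hj : j < n + 1) : (List.ofFn c)[j]? = some (c j) := by
    rw [List.getElem?_ofFn, dif_pos hj, Fin.mk_eq_mk.2 (Fin.val_cast_of_lt hj).symm]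
  have hwrap (j : ℕ) (hj : j = n + 1) : c j = true := by simp [hj, hc]
  simp only [List.infix_iff_getElem?, List.length_cons, List.length_nil, List.length_ofFn]
  constructor
  · rintro ⟨k, hk, h⟩
    have hwin (i : ℕ) (hi : i < 3) : c (k + i : ℕ) = false := by
      have := h i (by simpa using hi)
      rw [Nat.add_comm i k, hget _ (by omega)] at this
      interval_cases i <;> simpa using this
    refine ⟨k + 1, ?_, ?_, ?_⟩
    · simpa using hwin 0
    · simpa using hwin 1
    · simpa [add_assoc, one_add_one_eq_two] using hwin 2
  · rintro ⟨v, h0, h1, h2⟩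
    obtain ⟨k, hk, hv⟩ : ∃ k < n + 1, (k : Fin (n + 1)) = v - 1 :=
      ⟨(v - 1 : Fin (n + 1)), Fin.isLt _, Fin.cast_val_eq_self _⟩
    obtain rfl : v = k + 1 := by rw [hv, sub_add_cancel]
    simp only [add_sub_cancel_right, add_assoc, one_add_one_eq_two] at h0 h1 h2
    have hk2 : k + 2 < n + 1 := by
      by_contra hlt
      rcases (show k + 1 = n + 1 ∨ k + 2 = n + 1 by omega) with h | h
      · have := hwrap _ h
        push_cast at this
        simp [this] at h1
      · have := hwrap _ h
        push_cast at this
        simp [this] at h2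
    refine ⟨k, by omega, fun i hi ↦ ?_⟩
    interval_cases i
    · rw [zero_add, hget k hk, h0]; rfl
    · rw [Nat.add_comm 1 k, hget _ (by omega)]; simpa using h1
    · rw [Nat.add_comm 2 k, hget _ hk2]; simpa using h2

def stringWeight (l : List Bool) : ℤ :=
  if [false, false, false] <:+: l then 0 else (-1) ^ l.count true

def stringSum (p : List Bool) (k : ℕ) : ℤ :=
  ∑ f : Fin k → Bool, stringWeight (p ++ List.ofFn f)

theorem stringWeight_cons (b : Bool) (l : List Bool) (h : ¬ [false, false, false] <+: b :: l) :
    stringWeight (b :: l) = (if b then -1 else 1) * stringWeight l := by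
  simp only [stringWeight, List.infix_cons_iff, h, false_or, List.count_cons]
  split_ifs <;> simp_all [pow_succ]

theorem stringWeight_false_false_false_cons (l : List Bool) :
    stringWeight (false :: false :: false :: l) = 0 := by
  simp [stringWeight, List.infix_cons_iff]

theorem stringSum_succ (p : List Bool) (k : ℕ) :
    stringSum p (k + 1) = stringSum (p ++ [true]) k + stringSum (p ++ [false]) k := by
  rw [stringSum, Fintype.sum_ofFn_fin_succ fun l ↦ stringWeight (p ++ l), Fintype.sum_bool]
  simp [stringSum]

theorem stringSum_nil_add_three (k : ℕ) :
    stringSum [] (k + 3) = -stringSum [] (k + 2) - stringSum [] (k + 1) - stringSum [] k := by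
  have h₀ (j : ℕ) : stringSum [] (j + 1) = -stringSum [] j + stringSum [false] j := by
    rw [stringSum_succ]
    simp [stringSum, stringWeight_cons]
  have h₁ (j : ℕ) :
      stringSum [false] (j + 1) = -stringSum [] j + stringSum [false, false] j := by
    rw [stringSum_succ]
    simp [stringSum, stringWeight_cons]
  have h₂ (j : ℕ) : stringSum [false, false] (j + 1) = -stringSum [] j := by
    rw [stringSum_succ]
    simp [stringSum, stringWeight_cons, stringWeight_false_false_false_cons]
  rw [h₀, h₁, h₂]
  ring

theorem stringSum_nil_add_four (k : ℕ) : stringSum [] (k + 4) = stringSum [] k := by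
  have h := stringSum_nil_add_three (k + 1)
  simp only [add_assoc, Nat.reduceAdd] at h
  linear_combination h - stringSum_nil_add_three k

theorem stringSum_nil (k : ℕ) :
    stringSum [] k = if k % 4 = 0 then 1 else if k % 4 = 3 then -1 else 0 :=
  match k with
  | 0 | 1 | 2 => by decide
  | 3 => by rw [stringSum_nil_add_three 0]; decide
  | k + 4 => by rw [stringSum_nil_add_four, stringSum_nil k, Nat.add_mod_right]

open Classical in
theorem ite_isDominatingSet_cycleGraph_eq_stringWeight {n : ℕ} (c : Fin (n + 2) → Bool)
    (hc : c 0 = true) :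
    (if (cycleGraph (n + 2)).IsDominatingSet {v | c v} then (-1 : ℤ) ^ #{v | c v} else 0) =
      stringWeight (List.ofFn c) := by
  have hdom : (cycleGraph (n + 2)).IsDominatingSet {v | c v} ↔
      ¬ [false, false, false] <:+: List.ofFn c := by
    rw [isDominatingSet_cycleGraph_iff, List.triple_false_infix_ofFn_iff c hc]
    simp only [mem_filter, mem_univ, true_and, not_exists, not_and_or, Bool.not_eq_false]
  rw [stringWeight, Fin.card_filter_eq_count_ofFn]
  simp [hdom]

theorem signedDomSum_cycleGraph_zero (n : ℕ) :
    (cycleGraph (n + 3)).signedDomSum 0 = -stringSum [] (n + 2) := by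
  classical
  simp only [signedDomSum, and_comm (a := IsDominatingSet _ _), ← filter_filter]
  rw [sum_filter, Fin.sum_zero_mem_eq_sum_cons_true, stringSum, ← sum_neg_distrib]
  refine sum_congr rfl fun f _ ↦ ?_
  rw [ite_isDominatingSet_cycleGraph_eq_stringWeight _ (Fin.cons_zero _ _), List.ofFn_cons,
    List.nil_append, stringWeight_cons _ _ (by simp), if_pos rfl, neg_one_mul]

theorem eval_neg_one_derivative_domPoly_cycleGraph (n : ℕ) :
    (derivative (domPoly (cycleGraph (n + 3)))).eval (-1) =
      (n + 3 : ℤ) * stringSum [] (n + 2) := by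
  rw [eval_neg_one_derivative_domPoly,
    sum_signedDomSum_of_forall_iso _ 0 (cycleGraph_exists_iso_apply_zero _),
    signedDomSum_cycleGraph_zero, Fintype.card_fin]
  push_cast
  ring

theorem domPoly_cycle_deriv_neg_one (n : ℕ) (hn : 3 ≤ n) :
    (n % 4 = 0 → (derivative (domPoly (cycleGraph n))).eval (-1) = -(n : ℤ)) ∧
    (n % 4 = 1 → (derivative (domPoly (cycleGraph n))).eval (-1) = (n : ℤ)) ∧
    (n % 4 = 2 ∨ n % 4 = 3 → (derivative (domPoly (cycleGraph n))).eval (-1) = 0) := by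
  obtain ⟨m, rfl⟩ : ∃ m, n = m + 3 := ⟨n - 3, by omega⟩
  rw [eval_neg_one_derivative_domPoly_cycleGraph, stringSum_nil]
  push_cast
  refine ⟨fun h ↦ ?_, fun h ↦ ?_, fun h ↦ ?_⟩
  · rw [if_neg (by omega), if_pos (by omega)]
    ring
  · rw [if_pos (by omega)]
    ring
  · rw [if_neg (by omega), if_neg (by omega), mul_zero]
end

section
/- There are no integers n1 ≥ 1, n2 ≥ 3, n3 ≥ 3 with n2 ≡ n3 ≡ 2 (mod 4) and n1 ≡ 0 (mod 4) satisfying simultaneously n2^2 + n3^2 - 2 n1 n2 - 2 n1 n3 - 2 n2 n3 = 0 and n2^4 - 8 n2^3 n3 + 30 n2^2 n3^2 - 8 n2 n3^3 + n3^4 - 16 n2^2 - 32 n2 n3 - 16 n3^2 = 0. -/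
theorem case3_no_solutions :
    ¬ ∃ n1 n2 n3 : ℤ, 1 ≤ n1 ∧ 3 ≤ n2 ∧ 3 ≤ n3 ∧
      n1 % 4 = 0 ∧ n2 % 4 = 2 ∧ n3 % 4 = 2 ∧
      n2 ^ 2 + n3 ^ 2 - 2 * n1 * n2 - 2 * n1 * n3 - 2 * n2 * n3 = 0 ∧
      n2 ^ 4 - 8 * n2 ^ 3 * n3 + 30 * n2 ^ 2 * n3 ^ 2 - 8 * n2 * n3 ^ 3 + n3 ^ 4
        - 16 * n2 ^ 2 - 32 * n2 * n3 - 16 * n3 ^ 2 = 0 := by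
  rintro ⟨n1, n2, n3, h1, h2, h3, hm1, hm2, hm3, e1, e2⟩
  obtain ⟨a, ha⟩ : ∃ a : ℤ, n2 = 4 * a + 2 := ⟨n2 / 4, by omega⟩
  obtain ⟨b, hb⟩ : ∃ b : ℤ, n3 = 4 * b + 2 := ⟨n3 / 4, by omega⟩
  subst ha hb
  have ha1 : 1 ≤ a := by omega
  have hb1 : 1 ≤ b := by omega
  have key : (a+b+1)^4 - (3*(a-b)^2+1)*(a+b+1)^2 + 3*(a-b)^4 = 0 := by
    have h256 : (256 : ℤ) * ((a+b+1)^4 - (3*(a-b)^2+1)*(a+b+1)^2 + 3*(a-b)^4) = 0 := by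
      linear_combination e2
    omega
  have key2 : (6*(a-b)^2 - 3*(a+b+1)^2)^2 = 3*(a+b+1)^2*(4 - (a+b+1)^2) := by
    linear_combination 12 * key
  have hU : 3 ≤ a + b + 1 := by omega
  have hU2 : 9 ≤ (a + b + 1) ^ 2 := by nlinarith
  nlinarith [sq_nonneg (6*(a-b)^2 - 3*(a+b+1)^2), hU2,
    mul_le_mul_of_nonneg_left (show 4 - (a+b+1)^2 ≤ -5 by linarith)
      (show (0:ℤ) ≤ 3 * (a+b+1)^2 by positivity)]
end
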